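/- arXiv:2010.16329 — 6 statements merged into one kernel-verified Lean document; each statement's English description precedes it below -/
import Mathlib

section
/- Let R be a commutative ring, H a finite free R-module, and H^∨ = Hom_R(H,R). The assignment F ↦ F^⊥ := Ker(H^∨ → F^∨) (the kernel of the restriction map) is an inclusion-reversing bijection between direct summands of H and direct summands of H^∨, and it is involutive under the canonical identification H ≅ (H^∨)^∨ (i.e. (F^⊥)^⊥ = F). -/
open Submodule Module

private lemma aux_sep {R H : Type*} [CommRing R] [AddCommGroup H] [Module R H]
    [Module.IsReflexive R H] {x : H} (h : ∀ f : Module.Dual R H, f x = 0) : x = 0 := by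
  apply (Module.bijective_dual_eval R H).injective
  ext f
  simp [Module.Dual.eval_apply, h f]

private lemma aux_compl {R H : Type*} [CommRing R] [AddCommGroup H] [Module R H]
    {F F' : Submodule R H} (h : IsCompl F F') :
    IsCompl F.dualAnnihilator F'.dualAnnihilator := by
  constructor
  · rw [disjoint_iff]
    ext f
    simp only [Submodule.mem_inf, Submodule.mem_dualAnnihilator, Submodule.mem_bot]
    constructor
    · rintro ⟨h1, h2⟩
      ext x
      have hx : x ∈ F ⊔ F' := by rw [h.sup_eq_top]; trivial
      obtain ⟨y, hy, z, hz, rfl⟩ := Submodule.mem_sup.mp hx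
      simp [h1 y hy, h2 z hz]
    · rintro rfl
      simp
  · rw [codisjoint_iff, eq_top_iff]
    intro f _
    set p : H →ₗ[R] H := F.subtype ∘ₗ F.projectionOnto F' h with hp
    set p' : H →ₗ[R] H := F'.subtype ∘ₗ F'.projectionOnto F h.symm with hp'
    have hsum : ∀ x, p x + p' x = x := fun x =>
      Submodule.projection_add_projection_eq_self h x
    rw [Submodule.mem_sup]
    refine ⟨f ∘ₗ p', ?_, f ∘ₗ p, ?_, ?_⟩
    · rw [Submodule.mem_dualAnnihilator]
      intro w hw
      simp [hp', (Submodule.projection_apply_eq_zero_iff h.symm).2 hw]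
    · rw [Submodule.mem_dualAnnihilator]
      intro w hw
      simp [hp, (Submodule.projection_apply_eq_zero_iff h).2 hw]
    · ext x
      simp only [LinearMap.add_apply, LinearMap.comp_apply]
      rw [← map_add, add_comm, hsum x]

private lemma aux_coann {R H : Type*} [CommRing R] [AddCommGroup H] [Module R H]
    [Module.IsReflexive R H] {F F' : Submodule R H} (h : IsCompl F F') :
    F.dualAnnihilator.dualCoannihilator = F := by
  refine le_antisymm ?_ (Submodule.le_dualAnnihilator_dualCoannihilator F)
  intro x hx
  rw [Submodule.mem_dualCoannihilator] at hx
  set q : H →ₗ[R] H := F'.subtype ∘ₗ F'.projectionOnto F h.symm with hq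
  have hqx : q x = 0 := by
    apply aux_sep (R := R)
    intro g
    have hg : g ∘ₗ q ∈ F.dualAnnihilator := by
      rw [Submodule.mem_dualAnnihilator]
      intro w hw
      simp [hq, (Submodule.projection_apply_eq_zero_iff h.symm).2 hw]
    simpa using hx _ hg
  have hsum := Submodule.projection_add_projection_eq_self h x
  have : (F.subtype ∘ₗ F.projectionOnto F' h) x = x := by
    have hqx' : F'.projection F h.symm x = 0 := hqx
    simpa [hqx'] using hsum
  rw [← this]
  exact (F.projectionOnto F' h x).2

private lemma aux_swap {R H : Type*} [CommRing R] [AddCommGroup H] [Module R H]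
    [Module.IsReflexive R H] (E : Submodule R (Module.Dual R H)) :
    E.dualCoannihilator.dualAnnihilator = E.dualAnnihilator.dualCoannihilator := by
  ext f
  simp only [Submodule.mem_dualAnnihilator, Submodule.mem_dualCoannihilator]
  constructor
  · intro hf Φ hΦ
    obtain ⟨x, rfl⟩ := (Module.bijective_dual_eval R H).surjective Φ
    exact hf x hΦ
  · intro hf x hx
    exact hf (Module.Dual.eval R H x) hx

/-- For a commutative ring `R` and a finite free `R`-module `H`, the map
`F ↦ F^⊥ := Ker(H^∨ ↠ F^∨)` (which is `Submodule.dualAnnihilator F`) is an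
inclusion-reversing bijection between direct summands of `H` and direct summands of
`H^∨ = Module.Dual R H`, involutive under the canonical identification `H ≅ H^∨∨`
(i.e. `(F^⊥)^⊥ = F`, expressed via `dualCoannihilator`). -/
theorem stmt_1 (R : Type*) [CommRing R] (H : Type*) [AddCommGroup H] [Module R H]
    [Module.Free R H] [Module.Finite R H] :
    -- inclusion-reversing
    (∀ F G : Submodule R H, (∃ F', IsCompl F F') → (∃ G', IsCompl G G') →
      (F ≤ G ↔ G.dualAnnihilator ≤ F.dualAnnihilator)) ∧
    -- sends direct summands to direct summands
    (∀ F : Submodule R H, (∃ F', IsCompl F F') →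
      ∃ C, IsCompl F.dualAnnihilator C) ∧
    -- involutive: (F^⊥)^⊥ = F under H ≅ (H^∨)^∨
    (∀ F : Submodule R H, (∃ F', IsCompl F F') →
      F.dualAnnihilator.dualCoannihilator = F) ∧
    -- bijectivity: every direct summand of the dual arises
    (∀ E : Submodule R (Module.Dual R H), (∃ E', IsCompl E E') →
      ∃ F : Submodule R H, (∃ F', IsCompl F F') ∧ F.dualAnnihilator = E) := by
  refine ⟨?_, ?_, ?_, ?_⟩
  · rintro F G ⟨F', hF⟩ ⟨G', hG⟩
    constructor
    · exact fun h => Submodule.dualAnnihilator_anti h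
    · intro h
      have := Submodule.dualCoannihilator_anti h
      rwa [aux_coann hF, aux_coann hG] at this
  · rintro F ⟨F', hF⟩
    exact ⟨F'.dualAnnihilator, aux_compl hF⟩
  · rintro F ⟨F', hF⟩
    exact aux_coann hF
  · rintro E ⟨E', hE⟩
    have hcompl : IsCompl E.dualAnnihilator E'.dualAnnihilator := aux_compl hE
    refine ⟨E.dualCoannihilator, ⟨E'.dualCoannihilator, ?_⟩, ?_⟩
    · exact (Submodule.orderIsoMapComap (Module.evalEquiv R H)).symm.isCompl hcompl
    · rw [aux_swap]; exact aux_coann hE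
end

section
/- Let S be a scheme over a field of characteristic p, let E be a finite locally free O_S[T]/(T^e)-module of rank h (so locally free of rank eh over O_S), with a perfect alternating O_S-bilinear pairing ⟨,⟩ on E satisfying ⟨Tx, y⟩ = ⟨x, Ty⟩. Then for every 1 ≤ ℓ ≤ e, the orthogonal complement of E[T^ℓ] (the T^ℓ-torsion) equals E[T^{e-ℓ}], i.e. E[T^ℓ]^⊥ = T^ℓ E. -/
/-- Over a base over a field of characteristic `p` (affine case: a
`k`-algebra `R`), let `E` be a finite free `R[T]/(T^e)`-module of rank `h`, encoded by a
basis `b : Fin h × Fin e → E` on which the endomorphism `t` (the action of `T`) shifts the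
second index. Given a perfect alternating `R`-bilinear pairing `B` on `E` compatible with
`t` (`⟨Tx, y⟩ = ⟨x, Ty⟩`), for every `1 ≤ ℓ ≤ e` the orthogonal of the `T^ℓ`-torsion
`E[T^ℓ]` equals the `T^{e-ℓ}`-torsion `E[T^{e-ℓ}]`, which is `T^ℓ E`. -/
theorem stmt_2 (p : ℕ) (hp : p.Prime) (k : Type*) [Field k] [CharP k p]
    (R : Type*) [CommRing R] [Algebra k R]
    (E : Type*) [AddCommGroup E] [Module R E]
    (e h : ℕ) (t : E →ₗ[R] E)
    (b : Module.Basis (Fin h × Fin e) R E)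
    (hb : ∀ (i : Fin h) (j : Fin e),
      t (b (i, j)) = if hj : (j : ℕ) + 1 < e then b (i, ⟨(j : ℕ) + 1, hj⟩) else 0)
    (B : E →ₗ[R] Module.Dual R E)
    (hperf : Function.Bijective B)
    (halt : ∀ x, B x x = 0)
    (hcompat : ∀ x y, B (t x) y = B x (t y))
    (ℓ : ℕ) (hℓ1 : 1 ≤ ℓ) (hℓe : ℓ ≤ e) :
    (∀ x : E, (∀ y : E, (t ^ ℓ) y = 0 → B x y = 0) ↔ (t ^ (e - ℓ)) x = 0) ∧
    (∀ x : E, (t ^ (e - ℓ)) x = 0 ↔ ∃ z : E, (t ^ ℓ) z = x) := by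
  -- action of powers of `t` on the basis
  have hpow : ∀ (m : ℕ) (i : Fin h) (j : Fin e),
      (t ^ m) (b (i, j)) = if hj : (j : ℕ) + m < e then b (i, ⟨(j : ℕ) + m, hj⟩) else 0 := by
    intro m
    induction m with
    | zero =>
      intro i j
      have hj : (j : ℕ) + 0 < e := by simpa using j.2
      rw [pow_zero, Module.End.one_apply, dif_pos hj]
      rfl
    | succ n ih =>
      intro i j
      rw [pow_succ, Module.End.mul_apply, hb i j]
      by_cases hj1 : (j : ℕ) + 1 < e
      · rw [dif_pos hj1, ih i ⟨(j : ℕ) + 1, hj1⟩]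
        have hnat : ((⟨(j : ℕ) + 1, hj1⟩ : Fin e) : ℕ) + n = (j : ℕ) + (n + 1) := by
          simp only [Fin.val_mk]; omega
        simp only [hnat]
      · rw [dif_neg hj1, map_zero, dif_neg (by omega)]
  have hbcast : ∀ (i : Fin h) (a : ℕ) (h1 : a < e) (j : Fin e), a = (j : ℕ) →
      b (i, ⟨a, h1⟩) = b (i, j) := by
    rintro i a h1 j rfl
    rfl
  have hte : t ^ e = 0 := by
    apply b.ext
    rintro ⟨i, j⟩
    rw [hpow, dif_neg (by omega)]
    rfl
  have hsub : e - ℓ + ℓ = e := Nat.sub_add_cancel hℓe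
  have hsub' : ℓ + (e - ℓ) = e := by omega
  -- the "shift down" maps
  let down : ℕ → (E →ₗ[R] E) := fun m => Module.Basis.constr b ℕ
    (fun ij => if _ : m ≤ (ij.2 : ℕ) then
        b (ij.1, ⟨(ij.2 : ℕ) - m, lt_of_le_of_lt (Nat.sub_le _ _) ij.2.2⟩) else 0)
  have hdown : ∀ (m : ℕ) (i : Fin h) (j : Fin e),
      down m (b (i, j)) = if _ : m ≤ (j : ℕ) then
        b (i, ⟨(j : ℕ) - m, lt_of_le_of_lt (Nat.sub_le _ _) j.2⟩) else 0 := by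
    intro m i j
    exact b.constr_basis ℕ _ _
  -- compatibility of B with powers of t
  have hcomp : ∀ (m : ℕ) (x y : E), B ((t ^ m) x) y = B x ((t ^ m) y) := by
    intro m
    induction m with
    | zero => intro x y; simp
    | succ n ih =>
      intro x y
      rw [pow_succ, Module.End.mul_apply, Module.End.mul_apply, ih, hcompat,
        ← Module.End.mul_apply, ← pow_succ', pow_succ, Module.End.mul_apply]
  -- key: any element of ker t^{e-ℓ} is t^ℓ of something
  have hkey : ∀ x : E, (t ^ (e - ℓ)) x = 0 → (t ^ ℓ) (down ℓ x) = x := by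
    have hD : (LinearMap.id : E →ₗ[R] E) - (t ^ ℓ) ∘ₗ down ℓ
        = (down (e - ℓ)) ∘ₗ ((t ^ (e - ℓ)) ∘ₗ
            ((LinearMap.id : E →ₗ[R] E) - (t ^ ℓ) ∘ₗ down ℓ)) := by
      apply b.ext
      rintro ⟨i, j⟩
      simp only [LinearMap.sub_apply, LinearMap.comp_apply, LinearMap.id_apply, hdown]
      by_cases hm : ℓ ≤ (j : ℕ)
      · rw [dif_pos hm, hpow, dif_pos (show (j : ℕ) - ℓ + ℓ < e by omega),
          hbcast i ((j : ℕ) - ℓ + ℓ) (by omega) j (by omega)]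
        simp
      · rw [dif_neg hm, map_zero, sub_zero, hpow,
          dif_pos (show (j : ℕ) + (e - ℓ) < e by omega), hdown,
          dif_pos (show e - ℓ ≤ (j : ℕ) + (e - ℓ) by omega)]
        exact (hbcast i _ _ j (by simp only [Fin.val_mk]; omega)).symm
    intro x hx
    have h1 : x - (t ^ ℓ) (down ℓ x)
        = (down (e - ℓ)) ((t ^ (e - ℓ)) (x - (t ^ ℓ) (down ℓ x))) := by
      have := congrArg (fun f : E →ₗ[R] E => f x) hD
      simpa using this
    have h2 : (t ^ (e - ℓ)) ((t ^ ℓ) (down ℓ x)) = 0 := by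
      rw [← Module.End.mul_apply, ← pow_add, hsub, hte]
      rfl
    have h3 : (t ^ (e - ℓ)) (x - (t ^ ℓ) (down ℓ x)) = 0 := by
      rw [map_sub, hx, h2, sub_zero]
    rw [h3, map_zero] at h1
    exact (sub_eq_zero.mp h1).symm
  constructor
  · intro x
    constructor
    · intro hx
      have h0 : B ((t ^ (e - ℓ)) x) = 0 := by
        apply LinearMap.ext
        intro w
        rw [hcomp, LinearMap.zero_apply]
        apply hx
        rw [← Module.End.mul_apply, ← pow_add, hsub', hte]
        rfl
      have hB0 : B ((t ^ (e - ℓ)) x) = B 0 := by rw [h0, map_zero]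
      exact hperf.1 hB0
    · intro hx y hy
      rw [← hkey x hx, hcomp, hy, map_zero]
  · intro x
    constructor
    · intro hx
      exact ⟨down ℓ x, hkey x hx⟩
    · rintro ⟨z, rfl⟩
      rw [← Module.End.mul_apply, ← pow_add, hsub, hte]
      rfl
end

section
/- Let S be a scheme, O a discrete valuation ring with uniformizer π and Eisenstein polynomial Q(T) = ∏_{i=1}^e (T − π_i) over a base ring containing all roots π_i. Let E be a finite locally free O_S[T]/(Q(T))-module with a perfect alternating pairing compatible with T. Set Q_ℓ = ∏_{i≤ℓ}(T−π_i) and Q^ℓ = ∏_{i>ℓ}(T−π_i). Then for every 1 ≤ ℓ ≤ e, E[Q_ℓ]^⊥ = E[Q^ℓ], where E[R] denotes the kernel of R(T) acting on E. -/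
open Polynomial

private lemma aux_rep {R : Type*} [CommRing R] (P : ℕ → R[X])
    (hmon : ∀ j, (P j).Monic) (hdeg : ∀ j, (P j).natDegree = j) :
    ∀ (e : ℕ) (r : R[X]), r.degree < (e : ℕ) → ∃ c : Fin e → R, r = ∑ j, c j • P (j : ℕ) := by
  intro e
  induction e with
  | zero =>
    intro r hr
    refine ⟨fun j => 0, ?_⟩
    rw [Nat.cast_zero] at hr
    have : r = 0 := by
      rw [← Polynomial.degree_eq_bot]
      exact Nat.WithBot.lt_zero_iff.mp hr
    simp [this]
  | succ n ih =>
    intro r hr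
    by_cases h0 : r.degree < (n : ℕ)
    · obtain ⟨c, hc⟩ := ih r h0
      refine ⟨Fin.snoc c 0, ?_⟩
      rw [Fin.sum_univ_castSucc]
      simpa using hc
    · have hcoeff : ∀ m : ℕ, n < m → r.coeff m = 0 := by
        intro m hm
        exact (degree_lt_iff_coeff_zero r (n+1)).mp (by exact_mod_cast hr) m hm
      set cn := r.coeff n with hcn
      have hs : (r - cn • P n).degree < (n : ℕ) := by
        rw [degree_lt_iff_coeff_zero]
        intro m hm
        rcases eq_or_lt_of_le hm with h | h
        · have h1 : (P n).coeff n = 1 := by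
            have := (hmon n).coeff_natDegree
            rwa [hdeg n] at this
          rw [← h]
          simp [coeff_sub, h1, hcn]
        · have h1 : (P n).coeff m = 0 := by
            apply coeff_eq_zero_of_natDegree_lt
            rw [hdeg n]; exact h
          simp [coeff_sub, h1, hcoeff m h]
      obtain ⟨c, hc⟩ := ih _ hs
      refine ⟨Fin.snoc c cn, ?_⟩
      rw [Fin.sum_univ_castSucc]
      have : r = (r - cn • P n) + cn • P n := by ring
      rw [this, hc]
      simp

/-- Let `Q(T) = ∏_{i=1}^e (T − π_i)` over a commutative base ring `R`
containing all the roots `π_i`. Let `E` be a finite free `R[T]/(Q(T))`-module of rank `h`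
(encoded by a basis `b (i,j)` corresponding to the elements `∏_{i'≤j}(T − π_{i'})` of
`R[T]/Q`, on which the action `t` of `T` satisfies
`t b(i,j) = π_j • b(i,j) + b(i,j+1)`), with a perfect alternating pairing `B` compatible
with `t`. Then for `1 ≤ ℓ ≤ e`, `E[Q_ℓ]^⊥ = E[Q^ℓ]` where `Q_ℓ = ∏_{i≤ℓ}(T−π_i)` and
`Q^ℓ = ∏_{i>ℓ}(T−π_i)`, and `E[R]` denotes the kernel of `R(t)`. -/
theorem stmt_3 (R : Type*) [CommRing R]
    (E : Type*) [AddCommGroup E] [Module R E]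
    (e h : ℕ) (π : Fin e → R) (t : E →ₗ[R] E)
    (b : Module.Basis (Fin h × Fin e) R E)
    (hb : ∀ (i : Fin h) (j : Fin e),
      t (b (i, j)) = π j • b (i, j) +
        (if hj : (j : ℕ) + 1 < e then b (i, ⟨(j : ℕ) + 1, hj⟩) else 0))
    (B : E →ₗ[R] Module.Dual R E)
    (hperf : Function.Bijective B)
    (halt : ∀ x, B x x = 0)
    (hcompat : ∀ x y, B (t x) y = B x (t y))
    (ℓ : ℕ) (hℓ1 : 1 ≤ ℓ) (hℓe : ℓ ≤ e) :
    ∀ x : E,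
      (∀ y : E,
        (Polynomial.aeval t (∏ i ∈ Finset.univ.filter (fun i : Fin e => (i : ℕ) < ℓ),
          (Polynomial.X - Polynomial.C (π i)))) y = 0 → B x y = 0)
      ↔ (Polynomial.aeval t (∏ i ∈ Finset.univ.filter (fun i : Fin e => ℓ ≤ (i : ℕ)),
          (Polynomial.X - Polynomial.C (π i)))) x = 0 := by
  intro x
  rcases subsingleton_or_nontrivial R with hR | hR
  · haveI := Module.subsingleton R E
    constructor
    · intro _; exact Subsingleton.elim _ _
    · intro _ y _; exact Subsingleton.elim _ _
  have epos : 0 < e := lt_of_lt_of_le hℓ1 hℓe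
  set π' : ℕ → R := fun i => if hi : i < e then π ⟨i, hi⟩ else 0 with hπ'
  have hπ'' : ∀ i : Fin e, π' (i : ℕ) = π i := by
    intro i
    simp only [hπ', dif_pos i.isLt]
  set P : ℕ → R[X] := fun j => ∏ i ∈ Finset.range j, (X - C (π' i)) with hP
  set PHi : R[X] := ∏ i ∈ Finset.Ico ℓ e, (X - C (π' i)) with hPHi
  have hmon : ∀ j, (P j).Monic := fun j =>
    monic_prod_of_monic _ _ (fun i _ => monic_X_sub_C _)
  have hmonHi : PHi.Monic := monic_prod_of_monic _ _ (fun i _ => monic_X_sub_C _)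
  have hdeg : ∀ j, (P j).natDegree = j := by
    intro j
    rw [natDegree_prod_of_monic _ _ (fun i _ => monic_X_sub_C _)]
    simp [natDegree_X_sub_C]
  -- identify the theorem's products
  have hmaplo : (Finset.univ.filter (fun i : Fin e => (i : ℕ) < ℓ)).map Fin.valEmbedding
      = Finset.range ℓ := by
    ext k
    simp only [Finset.mem_map, Finset.mem_filter, Finset.mem_univ, true_and,
      Fin.valEmbedding_apply, Finset.mem_range]
    constructor
    · rintro ⟨i, hi, rfl⟩; exact hi
    · intro hk; exact ⟨⟨k, lt_of_lt_of_le hk hℓe⟩, hk, rfl⟩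
  have hmaphi : (Finset.univ.filter (fun i : Fin e => ℓ ≤ (i : ℕ))).map Fin.valEmbedding
      = Finset.Ico ℓ e := by
    ext k
    simp only [Finset.mem_map, Finset.mem_filter, Finset.mem_univ, true_and,
      Fin.valEmbedding_apply, Finset.mem_Ico]
    constructor
    · rintro ⟨i, hi, rfl⟩; exact ⟨hi, i.isLt⟩
    · rintro ⟨h1, h2⟩; exact ⟨⟨k, h2⟩, h1, rfl⟩
  have hQlo : (∏ i ∈ Finset.univ.filter (fun i : Fin e => (i : ℕ) < ℓ),
      (X - C (π i))) = P ℓ := by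
    show _ = ∏ i ∈ Finset.range ℓ, (X - C (π' i))
    rw [← hmaplo, Finset.prod_map]
    refine Finset.prod_congr rfl fun i _ => ?_
    rw [Fin.valEmbedding_apply, hπ'' i]
  have hQhi : (∏ i ∈ Finset.univ.filter (fun i : Fin e => ℓ ≤ (i : ℕ)),
      (X - C (π i))) = PHi := by
    show _ = ∏ i ∈ Finset.Ico ℓ e, (X - C (π' i))
    rw [← hmaphi, Finset.prod_map]
    refine Finset.prod_congr rfl fun i _ => ?_
    rw [Fin.valEmbedding_apply, hπ'' i]
  have hsplit : P e = P ℓ * PHi := by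
    rw [hP, hPHi]
    exact (Finset.prod_range_mul_prod_Ico _ hℓe).symm
  -- the basis generators
  set b0 : Fin h → E := fun i => b (i, ⟨0, epos⟩) with hb0
  have Lb : ∀ (i : Fin h) (j : ℕ), j ≤ e →
      aeval t (P j) (b0 i) = if hj' : j < e then b (i, ⟨j, hj'⟩) else 0 := by
    intro i j
    induction j with
    | zero =>
      intro _
      rw [dif_pos epos]
      simp [hP, hb0]
    | succ n ihn =>
      intro hj
      have hne : n < e := lt_of_lt_of_le (Nat.lt_succ_self n) hj
      have ihn' := ihn (le_of_lt hne)
      rw [dif_pos hne] at ihn'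
      have hPs : P (n + 1) = (X - C (π' n)) * P n := by
        rw [hP]
        exact (Finset.prod_range_succ _ n).trans (mul_comm _ _)
      rw [hPs, map_mul, Module.End.mul_apply, ihn']
      have hXC : (aeval t) (X - C (π' n)) (b (i, ⟨n, hne⟩))
          = t (b (i, ⟨n, hne⟩)) - π' n • (b (i, ⟨n, hne⟩)) := by
        simp [map_sub, aeval_X, aeval_C, Module.algebraMap_end_apply]
      rw [hXC, hb i ⟨n, hne⟩]
      have hπn : π' n = π ⟨n, hne⟩ := by simp [hπ', dif_pos hne]
      rw [hπn, add_sub_cancel_left]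
  have hbij : ∀ (i : Fin h) (j : Fin e), aeval t (P (j : ℕ)) (b0 i) = b (i, j) := by
    intro i j
    rw [Lb i j (le_of_lt j.isLt), dif_pos j.isLt]
  have Lkill : ∀ z : E, aeval t (P e) z = 0 := by
    suffices hsuff : ∀ p : Fin h × Fin e, aeval t (P e) (b p) = 0 by
      intro z
      rw [← b.sum_repr z, map_sum]
      simp only [map_smul, hsuff, smul_zero]
      exact Finset.sum_const_zero
    rintro ⟨i, j⟩
    rw [← hbij i j, ← Module.End.mul_apply, ← map_mul, mul_comm, map_mul,
      Module.End.mul_apply, Lb i e (le_refl e), dif_neg (lt_irrefl e), map_zero]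
  have hsum_mul : ∀ (q : R[X]) (p : Fin h → R[X]),
      aeval t q (∑ i, aeval t (p i) (b0 i)) = ∑ i, aeval t (q * p i) (b0 i) := by
    intro q p
    rw [map_sum]
    exact Finset.sum_congr rfl fun i _ => by rw [map_mul, Module.End.mul_apply]
  have hmod : ∀ (q : R[X]) (i : Fin h), aeval t q (b0 i) = aeval t (q %ₘ P e) (b0 i) := by
    intro q i
    conv_lhs => rw [← modByMonic_add_div q (P e)]
    rw [map_add, LinearMap.add_apply, map_mul, Module.End.mul_apply, Lkill, add_zero]
  have hdegmod : ∀ q : R[X], (q %ₘ P e).degree < (e : ℕ) := by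
    intro q
    have := degree_modByMonic_lt q (hmon e)
    rwa [degree_eq_natDegree (hmon e).ne_zero, hdeg e] at this
  have hsurj : ∀ z : E, ∃ p : Fin h → R[X], z = ∑ i, aeval t (p i) (b0 i) := by
    intro z
    refine ⟨fun i => ∑ j : Fin e, (b.repr z (i, j)) • P (j : ℕ), ?_⟩
    have hterm : ∀ i : Fin h,
        aeval t (∑ j : Fin e, (b.repr z (i, j)) • P (j : ℕ)) (b0 i)
          = ∑ j : Fin e, (b.repr z (i, j)) • b (i, j) := by
      intro i
      rw [map_sum, LinearMap.sum_apply]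
      refine Finset.sum_congr rfl fun j _ => ?_
      rw [map_smul, LinearMap.smul_apply, hbij i j]
    calc z = ∑ p : Fin h × Fin e, b.repr z p • b p := (b.sum_repr z).symm
      _ = ∑ i, ∑ j : Fin e, (b.repr z (i, j)) • b (i, j) := by
          rw [Fintype.sum_prod_type]
      _ = ∑ i, aeval t (∑ j : Fin e, (b.repr z (i, j)) • P (j : ℕ)) (b0 i) := by
          exact Finset.sum_congr rfl fun i _ => (hterm i).symm
  have KL : ∀ p : Fin h → R[X], (∀ i, (p i).degree < (e : ℕ)) →
      (∑ i, aeval t (p i) (b0 i)) = 0 → ∀ i, p i = 0 := by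
    intro p hdegp hzero i
    choose c hc using fun i => aux_rep P hmon hdeg e (p i) (hdegp i)
    have hsum0 : ∑ q : Fin h × Fin e, c q.1 q.2 • b q = 0 := by
      rw [Fintype.sum_prod_type, ← hzero]
      refine Finset.sum_congr rfl fun i' _ => ?_
      rw [hc i', map_sum, LinearMap.sum_apply]
      refine Finset.sum_congr rfl fun j _ => ?_
      rw [map_smul, LinearMap.smul_apply, hbij i' j]
    have hc0 := Fintype.linearIndependent_iff.mp b.linearIndependent
      (fun q => c q.1 q.2) hsum0
    rw [hc i]
    refine Finset.sum_eq_zero fun j _ => ?_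
    rw [show c i j = 0 from hc0 (i, j), zero_smul]
  have hker_range : ∀ y : E, aeval t (P ℓ) y = 0 → ∃ z : E, y = aeval t PHi z := by
    intro y hy
    obtain ⟨p, hp⟩ := hsurj y
    set r : Fin h → R[X] := fun i => p i %ₘ P e with hr
    have hyr : y = ∑ i, aeval t (r i) (b0 i) := by
      rw [hp]
      exact Finset.sum_congr rfl fun i _ => hmod (p i) i
    have h2 : ∑ i, aeval t ((P ℓ * r i) %ₘ P e) (b0 i) = 0 := by
      have h1 : ∑ i, aeval t (P ℓ * r i) (b0 i) = 0 := by
        rw [← hsum_mul, ← hyr, hy]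
      rw [← h1]
      exact Finset.sum_congr rfl fun i _ => (hmod (P ℓ * r i) i).symm
    have hdvd : ∀ i, ∃ g : R[X], r i = PHi * g := by
      intro i
      have h3 : (P ℓ * r i) %ₘ P e = 0 :=
        KL _ (fun i => hdegmod _) h2 i
      have h4 : P e ∣ P ℓ * r i := (modByMonic_eq_zero_iff_dvd (hmon e)).mp h3
      obtain ⟨g, hg⟩ := h4
      refine ⟨g, ?_⟩
      have h5 : P ℓ * r i = P ℓ * (PHi * g) := by rw [hg, hsplit, mul_assoc]
      exact (hmon ℓ).isRegular.left h5
    choose g hg using hdvd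
    refine ⟨∑ i, aeval t (g i) (b0 i), ?_⟩
    rw [hyr, hsum_mul PHi g]
    exact Finset.sum_congr rfl fun i _ => by rw [hg i]
  have hcompatP : ∀ (p : R[X]) (u v : E), B (aeval t p u) v = B u (aeval t p v) := by
    intro p
    induction p using Polynomial.induction_on with
    | C a =>
      intro u v
      simp [aeval_C, Module.algebraMap_end_apply, map_smul]
    | add p q hp hq =>
      intro u v
      simp only [map_add, LinearMap.add_apply]
      rw [hp u v, hq u v]
    | monomial n a ih =>
      intro u v
      have key : ∀ w : E, aeval t (C a * X ^ (n + 1)) w = aeval t (C a * X ^ n) (t w) := by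
        intro w
        rw [pow_succ, ← mul_assoc, map_mul, Module.End.mul_apply, aeval_X]
      have hcomm : ∀ w : E, t (aeval t (C a * X ^ n) w) = aeval t (C a * X ^ n) (t w) := by
        intro w
        have h1 : aeval t (X * (C a * X ^ n)) w = t (aeval t (C a * X ^ n) w) := by
          rw [map_mul (aeval t) X (C a * X ^ n), Module.End.mul_apply, aeval_X]
        rw [← h1, mul_comm X (C a * X ^ n),
          map_mul (aeval t) (C a * X ^ n) X, Module.End.mul_apply, aeval_X]
      calc B (aeval t (C a * X ^ (n + 1)) u) v
          = B (aeval t (C a * X ^ n) (t u)) v := by rw [key u]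
        _ = B (t u) (aeval t (C a * X ^ n) v) := ih (t u) v
        _ = B u (t (aeval t (C a * X ^ n) v)) := hcompat u _
        _ = B u (aeval t (C a * X ^ n) (t v)) := by rw [hcomm v]
        _ = B u (aeval t (C a * X ^ (n + 1)) v) := by rw [key v]
  rw [hQlo, hQhi]
  constructor
  · intro hx
    apply hperf.injective
    rw [map_zero]
    apply LinearMap.ext
    intro z
    rw [LinearMap.zero_apply, hcompatP PHi x z]
    apply hx
    rw [← Module.End.mul_apply, ← map_mul, ← hsplit, Lkill]
  · intro hx y hy
    obtain ⟨z, hz⟩ := hker_range y hy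
    rw [hz, ← hcompatP PHi x z, hx, map_zero, LinearMap.zero_apply]
end

section
/- With the notation of the full Pappas-Rapoport filtration: let E be a finite locally free O_S[T]/(Q(T))-module of rank h, N ⊆ E a direct summand carrying a Pappas-Rapoport filtration 0 = N^[0] ⊆ N^[1] ⊆ … ⊆ N^[e] = N with rank(N^[j]/N^[j−1]) = d_j and (T − π_j)N^[j] ⊆ N^[j−1]. Define N^[2e−ℓ] = (Q^ℓ(T))^{-1}(N^[ℓ]) for 1 ≤ ℓ ≤ e−1. Then for each 1 ≤ j ≤ e−1, N^[e+j] is locally free of rank jh + d_1 + ⋯ + d_{e−j}, and (T − π_{e−j+1}) N^[e+j] ⊆ N^[e+j−1]. -/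
open Polynomial

section Stmt4AuxSec
open Finset
namespace Stmt4Aux

variable {k : Type*} [Field k] {E : Type*} [AddCommGroup E] [Module k E]
  {e h : ℕ} {π : Fin e → k} {t : E →ₗ[k] E}

/-- extended basis vector: `b (i, n)` when `n < e`, and `0` otherwise. -/
noncomputable def Bv (b : Module.Basis (Fin h × Fin e) k E) (i : Fin h) (n : ℕ) : E :=
  if hn : n < e then b (i, ⟨n, hn⟩) else 0

/-- span of basis vectors with second index `< n`. -/
def Usub (b : Module.Basis (Fin h × Fin e) k E) (n : ℕ) : Submodule k E :=
  Submodule.span k (b '' {p | (p.2 : ℕ) < n})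

/-- span of basis vectors with second index `≥ n`. -/
def Wsub (b : Module.Basis (Fin h × Fin e) k E) (n : ℕ) : Submodule k E :=
  Submodule.span k (b '' {p | n ≤ (p.2 : ℕ)})

variable (b : Module.Basis (Fin h × Fin e) k E)

lemma hb' (hb : ∀ (i : Fin h) (j : Fin e),
      t (b (i, j)) = π j • b (i, j) +
        (if hj : (j : ℕ) + 1 < e then b (i, ⟨(j : ℕ) + 1, hj⟩) else 0))
    (i : Fin h) (j : Fin e) :
    t (b (i, j)) = π j • b (i, j) + Bv b i ((j : ℕ) + 1) := hb i j

lemma tBv (hb : ∀ (i : Fin h) (j : Fin e),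
      t (b (i, j)) = π j • b (i, j) +
        (if hj : (j : ℕ) + 1 < e then b (i, ⟨(j : ℕ) + 1, hj⟩) else 0))
    (i : Fin h) (n : ℕ) (hn : n < e) :
    t (Bv b i n) = π ⟨n, hn⟩ • Bv b i n + Bv b i (n + 1) := by
  have : Bv b i n = b (i, ⟨n, hn⟩) := dif_pos hn
  rw [this, hb' b hb]

lemma Bv_mem_Usub {i : Fin h} {n m : ℕ} (hnm : n < m) : Bv b i n ∈ Usub b m := by
  unfold Bv
  split
  · exact Submodule.subset_span ⟨(i, ⟨n, ‹_›⟩), hnm, rfl⟩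
  · exact zero_mem _

lemma Bv_mem_Wsub {i : Fin h} {n m : ℕ} (hmn : m ≤ n) : Bv b i n ∈ Wsub b m := by
  unfold Bv
  split
  · exact Submodule.subset_span ⟨(i, ⟨n, ‹_›⟩), hmn, rfl⟩
  · exact zero_mem _

lemma basis_mem_Usub {p : Fin h × Fin e} {m : ℕ} (hp : (p.2 : ℕ) < m) : b p ∈ Usub b m :=
  Submodule.subset_span ⟨p, hp, rfl⟩

lemma basis_mem_Wsub {p : Fin h × Fin e} {m : ℕ} (hp : m ≤ (p.2 : ℕ)) : b p ∈ Wsub b m :=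
  Submodule.subset_span ⟨p, hp, rfl⟩

lemma Usub_mono {m n : ℕ} (hmn : m ≤ n) : Usub b m ≤ Usub b n :=
  Submodule.span_mono (Set.image_mono fun p hp => lt_of_lt_of_le hp hmn)

lemma Usub_zero : Usub b 0 = ⊥ := by
  have : {p : Fin h × Fin e | (p.2 : ℕ) < 0} = ∅ := by ext p; simp
  simp [Usub, this]

lemma Wsub_zero : Wsub b 0 = ⊤ := by
  have : {p : Fin h × Fin e | 0 ≤ (p.2 : ℕ)} = Set.univ := by ext p; simp
  simp [Wsub, this, b.span_eq]

lemma Wsub_bot {n : ℕ} (hn : e ≤ n) : Wsub b n = ⊥ := by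
  have : {p : Fin h × Fin e | n ≤ (p.2 : ℕ)} = ∅ := by
    ext p; simp only [Set.mem_setOf_eq, Set.mem_empty_iff_false, iff_false, not_le]
    exact lt_of_lt_of_le p.2.2 hn
  simp [Wsub, this]

lemma repr_eq_zero_of_mem_Usub {x : E} {n : ℕ} {q : Fin h × Fin e}
    (hx : x ∈ Usub b n) (hq : n ≤ (q.2 : ℕ)) : b.repr x q = 0 := by
  rw [Usub, Module.Basis.mem_span_image] at hx
  by_contra h0
  have := hx (Finsupp.mem_support_iff.2 h0)
  simp only [Set.mem_setOf_eq] at this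
  omega

/-- `(t - c) • U n ⊆ U (n+1)` -/
lemma step_Usub (hb : ∀ (i : Fin h) (j : Fin e),
      t (b (i, j)) = π j • b (i, j) +
        (if hj : (j : ℕ) + 1 < e then b (i, ⟨(j : ℕ) + 1, hj⟩) else 0))
    (c : k) {n : ℕ} {x : E} (hx : x ∈ Usub b n) : t x - c • x ∈ Usub b (n + 1) := by
  have hle : Usub b n ≤ Submodule.comap (t - c • (LinearMap.id : E →ₗ[k] E)) (Usub b (n + 1)) := by
    rw [Usub, Submodule.span_le]
    rintro _ ⟨⟨p1, p2⟩, hp, rfl⟩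
    simp only [Set.mem_setOf_eq] at hp
    simp only [SetLike.mem_coe, Submodule.mem_comap, LinearMap.sub_apply, LinearMap.smul_apply,
      LinearMap.id_apply]
    rw [hb' b hb p1 p2]
    have heq : π p2 • b (p1, p2) + Bv b p1 ((p2 : ℕ) + 1) - c • b (p1, p2)
        = (π p2 - c) • b (p1, p2) + Bv b p1 ((p2 : ℕ) + 1) := by
      rw [sub_smul]; abel
    rw [heq]
    exact add_mem (Submodule.smul_mem _ _ (basis_mem_Usub b (Nat.lt_succ_of_lt hp)))
      (Bv_mem_Usub b (by omega))
  have := hle hx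
  simpa using this

/-- `(t - π n) • W n ⊆ W (n+1)` -/
lemma step_Wsub (hb : ∀ (i : Fin h) (j : Fin e),
      t (b (i, j)) = π j • b (i, j) +
        (if hj : (j : ℕ) + 1 < e then b (i, ⟨(j : ℕ) + 1, hj⟩) else 0))
    {n : ℕ} (hn : n < e) {x : E} (hx : x ∈ Wsub b n) :
    t x - π ⟨n, hn⟩ • x ∈ Wsub b (n + 1) := by
  have hle : Wsub b n ≤
      Submodule.comap (t - π ⟨n, hn⟩ • (LinearMap.id : E →ₗ[k] E)) (Wsub b (n + 1)) := by
    rw [Wsub, Submodule.span_le]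
    rintro _ ⟨⟨p1, p2⟩, hp, rfl⟩
    simp only [Set.mem_setOf_eq] at hp
    simp only [SetLike.mem_coe, Submodule.mem_comap, LinearMap.sub_apply, LinearMap.smul_apply,
      LinearMap.id_apply]
    rw [hb' b hb p1 p2]
    have heq : π p2 • b (p1, p2) + Bv b p1 ((p2 : ℕ) + 1) - π ⟨n, hn⟩ • b (p1, p2)
        = (π p2 - π ⟨n, hn⟩) • b (p1, p2) + Bv b p1 ((p2 : ℕ) + 1) := by
      rw [sub_smul]; abel
    rw [heq]
    refine add_mem ?_ (Bv_mem_Wsub b (by omega))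
    rcases eq_or_lt_of_le hp with hpe | hpl
    · have : p2 = (⟨n, hn⟩ : Fin e) := Fin.ext hpe.symm
      rw [this, sub_self, zero_smul]
      exact zero_mem _
    · exact Submodule.smul_mem _ _ (basis_mem_Wsub b hpl)
  have := hle hx
  simpa using this


/-- `∏_{c ≥ n} (X - C (π c))` -/
noncomputable def Rp (π : Fin e → k) (n : ℕ) : k[X] :=
  ∏ i ∈ Finset.univ.filter (fun i : Fin e => n ≤ (i : ℕ)), (X - C (π i))

/-- `∏_{c < n} (X - C (π c))` -/
noncomputable def Lp (π : Fin e → k) (n : ℕ) : k[X] :=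
  ∏ i ∈ Finset.univ.filter (fun i : Fin e => (i : ℕ) < n), (X - C (π i))

lemma filter_ge_eq_insert {n : ℕ} (hn : n < e) :
    Finset.univ.filter (fun i : Fin e => n ≤ (i : ℕ)) =
      insert ⟨n, hn⟩ (Finset.univ.filter (fun i : Fin e => n + 1 ≤ (i : ℕ))) := by
  ext c
  simp only [mem_filter, mem_univ, true_and, mem_insert]
  constructor
  · intro hc
    rcases eq_or_lt_of_le hc with hc' | hc'
    · exact Or.inl (Fin.ext hc'.symm)
    · exact Or.inr hc'
  · rintro (rfl | hc)
    · exact le_refl _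
    · omega

lemma Rp_succ {n : ℕ} (hn : n < e) :
    Rp π n = (X - C (π ⟨n, hn⟩)) * Rp π (n + 1) := by
  rw [Rp, filter_ge_eq_insert hn, prod_insert (by simp)]
  rfl

lemma filter_lt_succ_eq_insert {n : ℕ} (hn : n < e) :
    Finset.univ.filter (fun i : Fin e => (i : ℕ) < n + 1) =
      insert ⟨n, hn⟩ (Finset.univ.filter (fun i : Fin e => (i : ℕ) < n)) := by
  ext c
  simp only [mem_filter, mem_univ, true_and, mem_insert]
  constructor
  · intro hc
    rcases eq_or_lt_of_le (Nat.lt_succ_iff.1 hc) with hc' | hc'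
    · exact Or.inl (Fin.ext hc')
    · exact Or.inr hc'
  · rintro (rfl | hc)
    · simp
    · omega

lemma Lp_succ {n : ℕ} (hn : n < e) :
    Lp π (n + 1) = Lp π n * (X - C (π ⟨n, hn⟩)) := by
  rw [Lp, filter_lt_succ_eq_insert hn, prod_insert (by simp), mul_comm]
  rfl

lemma Lp_zero : Lp π 0 = 1 := by
  rw [Lp]
  have : Finset.univ.filter (fun i : Fin e => (i : ℕ) < 0) = ∅ := by
    ext c; simp
  rw [this, prod_empty]

lemma Rp_zero_eq (n : ℕ) : Lp π n * Rp π n = Rp π 0 := by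
  rw [Lp, Rp, Rp]
  have h1 : Finset.univ.filter (fun i : Fin e => n ≤ (i : ℕ)) =
      Finset.univ.filter (fun i : Fin e => ¬ ((i : ℕ) < n)) := by
    apply Finset.filter_congr; intro c _; simp
  have h2 : Finset.univ.filter (fun i : Fin e => 0 ≤ (i : ℕ)) = Finset.univ := by
    apply Finset.filter_true_of_mem; intro c _; omega
  rw [h1, h2, Finset.prod_filter_mul_prod_filter_not]

lemma aeval_lin (a : k) (x : E) : (aeval t (X - C a)) x = t x - a • x := by
  rw [map_sub, LinearMap.sub_apply, aeval_X, aeval_C, Module.algebraMap_end_apply]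


lemma aeval_mul_apply (P Q : k[X]) (x : E) :
    (aeval t (P * Q)) x = (aeval t P) ((aeval t Q) x) := by
  rw [map_mul]; rfl

lemma aeval_Rp_zero_aux (hb : ∀ (i : Fin h) (j : Fin e),
      t (b (i, j)) = π j • b (i, j) +
        (if hj : (j : ℕ) + 1 < e then b (i, ⟨(j : ℕ) + 1, hj⟩) else 0)) :
    ∀ (K n : ℕ), e ≤ n + K → ∀ x ∈ Wsub b n, (aeval t (Rp π n)) x = 0 := by
  intro K
  induction K with
  | zero =>
    intro n hn x hx
    rw [Wsub_bot b (by omega)] at hx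
    simp only [Submodule.mem_bot] at hx
    rw [hx, map_zero]
  | succ K ih =>
    intro n hn x hx
    by_cases hne : e ≤ n
    · rw [Wsub_bot b hne] at hx
      simp only [Submodule.mem_bot] at hx
      rw [hx, map_zero]
    · push_neg at hne
      rw [Rp_succ hne, mul_comm, aeval_mul_apply, aeval_lin]
      exact ih (n + 1) (by omega) _ (step_Wsub b hb hne hx)

/-- `Q(t) = 0` -/
lemma aeval_Rp_zero (hb : ∀ (i : Fin h) (j : Fin e),
      t (b (i, j)) = π j • b (i, j) +
        (if hj : (j : ℕ) + 1 < e then b (i, ⟨(j : ℕ) + 1, hj⟩) else 0))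
    (x : E) : (aeval t (Rp π 0)) x = 0 := by
  refine aeval_Rp_zero_aux b hb e 0 (by omega) x ?_
  rw [Wsub_zero b]
  trivial

lemma aeval_Lp_N (N : ℕ → Submodule k E) (hN0 : N 0 = ⊥)
    (hstep : ∀ (j : ℕ) (hj : j < e), ∀ x ∈ N (j + 1), t x - π ⟨j, hj⟩ • x ∈ N j) :
    ∀ n, n ≤ e → ∀ x ∈ N n, (aeval t (Lp π n)) x = 0 := by
  intro n
  induction n with
  | zero =>
    intro _ x hx
    rw [hN0] at hx
    simp only [Submodule.mem_bot] at hx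
    rw [hx, map_zero]
  | succ n ih =>
    intro hn x hx
    have hne : n < e := by omega
    rw [Lp_succ hne, aeval_mul_apply, aeval_lin]
    exact ih (by omega) _ (hstep n hne x hx)

/-- Triangularity of `∏_{c ∈ s} (t - π c)` with respect to the basis filtration. -/
lemma tri (hb : ∀ (i : Fin h) (j : Fin e),
      t (b (i, j)) = π j • b (i, j) +
        (if hj : (j : ℕ) + 1 < e then b (i, ⟨(j : ℕ) + 1, hj⟩) else 0))
    (s : Finset (Fin e)) (i : Fin h) (m : ℕ) (hm : m < e) :
    (aeval t (∏ c ∈ s, (X - C (π c)))) (b (i, ⟨m, hm⟩)) - Bv b i (m + s.card)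
      ∈ Usub b (m + s.card) := by
  classical
  induction s using Finset.induction with
  | empty =>
    have : Bv b i (m + 0) = b (i, ⟨m, hm⟩) := dif_pos hm
    rw [card_empty, prod_empty, map_one, this]
    simp only [Module.End.one_apply, sub_self]
    exact zero_mem _
  | @insert a s ha ih =>
    rw [prod_insert ha, aeval_mul_apply, card_insert_of_notMem ha]
    set n := m + s.card with hn
    have hcard : m + (s.card + 1) = n + 1 := by omega
    rw [hcard]
    set y := (aeval t (∏ c ∈ s, (X - C (π c)))) (b (i, ⟨m, hm⟩)) with hy
    set u := y - Bv b i n with hu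
    have hyy : y = Bv b i n + u := by rw [hu]; abel
    rw [aeval_lin, hyy]
    have key : t (Bv b i n + u) - π a • (Bv b i n + u) - Bv b i (n + 1)
        = (t (Bv b i n) - π a • Bv b i n - Bv b i (n + 1)) + (t u - π a • u) := by
      rw [map_add, smul_add]; abel
    rw [key]
    refine add_mem ?_ (step_Usub b hb (π a) ih)
    by_cases hne : n < e
    · rw [tBv b hb i n hne]
      have : π ⟨n, hne⟩ • Bv b i n + Bv b i (n + 1) - π a • Bv b i n - Bv b i (n + 1)
          = (π ⟨n, hne⟩ - π a) • Bv b i n := by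
        rw [sub_smul]; abel
      rw [this]
      exact Submodule.smul_mem _ _ (Bv_mem_Usub b (by omega))
    · have h1 : Bv b i n = 0 := dif_neg hne
      have h2 : Bv b i (n + 1) = 0 := dif_neg (by omega)
      rw [h1, h2, map_zero, smul_zero, sub_zero, sub_zero]
      exact zero_mem _


/-- If `g` is triangular of shift `c`, then `g` maps `U n` into `U (n + c)`. -/
lemma gU (g : E →ₗ[k] E) (c : ℕ)
    (hg : ∀ (i : Fin h) (m : ℕ) (hm : m < e),
      g (b (i, ⟨m, hm⟩)) - Bv b i (m + c) ∈ Usub b (m + c))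
    (n : ℕ) {z : E} (hz : z ∈ Usub b n) : g z ∈ Usub b (n + c) := by
  have hle : Usub b n ≤ Submodule.comap g (Usub b (n + c)) := by
    rw [Usub, Submodule.span_le]
    rintro _ ⟨⟨p1, p2⟩, hp, rfl⟩
    simp only [Set.mem_setOf_eq] at hp
    simp only [SetLike.mem_coe, Submodule.mem_comap]
    have h1 := hg p1 (p2 : ℕ) p2.2
    have hbp : b (p1, ⟨(p2 : ℕ), p2.2⟩) = b (p1, p2) := by congr
    rw [hbp] at h1
    have : g (b (p1, p2)) = (g (b (p1, p2)) - Bv b p1 ((p2 : ℕ) + c)) +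
        Bv b p1 ((p2 : ℕ) + c) := by abel
    rw [this]
    exact add_mem (Usub_mono b (by omega) h1) (Bv_mem_Usub b (by omega))
  exact hle hz

/-- Triangular maps of shift `c` are injective on `U n` when `n + c ≤ e`. -/
lemma inj (g : E →ₗ[k] E) (c : ℕ)
    (hg : ∀ (i : Fin h) (m : ℕ) (hm : m < e),
      g (b (i, ⟨m, hm⟩)) - Bv b i (m + c) ∈ Usub b (m + c)) :
    ∀ n, n + c ≤ e → ∀ x ∈ Usub b n, g x = 0 → x = 0 := by
  intro n
  induction n with
  | zero =>
    intro _ x hx _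
    rw [Usub_zero b] at hx
    simpa using hx
  | succ n ih =>
    intro hn x hx hgx
    have hne : n < e := by omega
    have hnc : n + c < e := by omega
    set a : Fin h → k := fun i => b.repr x (i, ⟨n, hne⟩) with ha
    set z : E := x - ∑ i, a i • b (i, ⟨n, hne⟩) with hz
    -- z has support with second coordinate < n
    have hzU : z ∈ Usub b n := by
      rw [Usub, Module.Basis.mem_span_image]
      intro q hq
      simp only [Set.mem_setOf_eq]
      by_contra hq2
      push_neg at hq2
      have hrepr : b.repr z q = 0 := by
        rw [hz, map_sub, map_sum]
        simp only [Finsupp.coe_sub, Finsupp.coe_finset_sum, Pi.sub_apply, Finset.sum_apply]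
        have hsum : ∀ i : Fin h, (b.repr (a i • b (i, ⟨n, hne⟩))) q
            = if (i, (⟨n, hne⟩ : Fin e)) = q then a i else 0 := by
          intro i
          rw [map_smul, b.repr_self]
          simp [Finsupp.single_apply, Finsupp.smul_single]
        rcases eq_or_lt_of_le hq2 with hqe | hql
        · -- (q.2 : ℕ) = n
          have hq' : q = (q.1, ⟨n, hne⟩) := by
            ext
            · rfl
            · exact hqe.symm
          rw [hq'] at hsum ⊢
          have : ∑ i : Fin h, (b.repr (a i • b (i, ⟨n, hne⟩))) (q.1, ⟨n, hne⟩) = a q.1 := by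
            rw [Finset.sum_congr rfl (fun i _ => hsum i)]
            simp [Prod.ext_iff]
          rw [this, ha]
          simp
        · -- n < q.2 : both terms vanish
          have h1 : b.repr x q = 0 := repr_eq_zero_of_mem_Usub b hx (by omega)
          have h2 : ∑ i : Fin h, (b.repr (a i • b (i, ⟨n, hne⟩))) q = 0 := by
            rw [Finset.sum_congr rfl (fun i _ => hsum i)]
            apply Finset.sum_eq_zero
            intro i _
            rw [if_neg]
            intro hcon
            have := congrArg (fun p => (p.2 : ℕ)) hcon
            simp at this
            omega
          rw [h1, h2]
          simp
      exact absurd hrepr (Finsupp.mem_support_iff.1 hq)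
    -- all the coefficients a i vanish
    have hcoef : ∀ i₀ : Fin h, a i₀ = 0 := by
      intro i₀
      have hgx' : b.repr (g x) (i₀, ⟨n + c, hnc⟩) = 0 := by rw [hgx, map_zero]; simp
      have hxz : x = z + ∑ i, a i • b (i, ⟨n, hne⟩) := by rw [hz]; abel
      rw [hxz, map_add, map_add] at hgx'
      simp only [Finsupp.coe_add, Pi.add_apply] at hgx'
      have h1 : b.repr (g z) (i₀, ⟨n + c, hnc⟩) = 0 :=
        repr_eq_zero_of_mem_Usub b (gU b g c hg n hzU) (by simp)
      have h2 : b.repr (g (∑ i, a i • b (i, ⟨n, hne⟩))) (i₀, ⟨n + c, hnc⟩) = a i₀ := by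
        rw [map_sum, map_sum]
        simp only [Finsupp.coe_finset_sum, Finset.sum_apply]
        have hterm : ∀ i : Fin h, (b.repr (g (a i • b (i, ⟨n, hne⟩)))) (i₀, ⟨n + c, hnc⟩)
            = if i = i₀ then a i else 0 := by
          intro i
          rw [map_smul, map_smul]
          have hgb : g (b (i, ⟨n, hne⟩)) = (g (b (i, ⟨n, hne⟩)) - Bv b i (n + c)) +
              Bv b i (n + c) := by abel
          rw [hgb, map_add]
          have hu : b.repr (g (b (i, ⟨n, hne⟩)) - Bv b i (n + c)) (i₀, ⟨n + c, hnc⟩) = 0 :=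
            repr_eq_zero_of_mem_Usub b (hg i n hne) (by simp)
          have hBv : Bv b i (n + c) = b (i, ⟨n + c, hnc⟩) := dif_pos hnc
          simp only [Finsupp.coe_add, Finsupp.coe_smul, Pi.add_apply, Pi.smul_apply, hu,
            smul_eq_mul]
          rw [hBv, b.repr_self]
          simp [Finsupp.single_apply, Prod.ext_iff]
        rw [Finset.sum_congr rfl (fun i _ => hterm i)]
        simp
      rw [h1, h2, zero_add] at hgx'
      exact hgx'
    have hxz : x = z := by
      rw [hz]
      have : ∑ i, a i • b (i, ⟨n, hne⟩) = 0 := by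
        apply Finset.sum_eq_zero
        intro i _
        rw [hcoef i, zero_smul]
      rw [this, sub_zero]
    rw [hxz] at hgx ⊢
    exact ih (by omega) z (hzU) hgx


lemma card_filter_fin_ge (n : ℕ) :
    (Finset.univ.filter fun c : Fin e => n ≤ (c : ℕ)).card = e - n := by
  classical
  have hbij : (Finset.univ.filter fun c : Fin e => n ≤ (c : ℕ)).card
      = (Finset.univ : Finset (Fin (e - n))).card := by
    refine Finset.card_bij (fun c hc => (⟨(c : ℕ) - n, by
      have := (Finset.mem_filter.1 hc).2
      have := c.2
      omega⟩ : Fin (e - n))) ?_ ?_ ?_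
    · intro a ha; exact Finset.mem_univ _
    · intro a₁ ha₁ a₂ ha₂ heq
      have h1 := (Finset.mem_filter.1 ha₁).2
      have h2 := (Finset.mem_filter.1 ha₂).2
      have := congrArg Fin.val heq
      simp only at this
      exact Fin.ext (by omega)
    · intro q _
      refine ⟨⟨n + (q : ℕ), by have := q.2; omega⟩, Finset.mem_filter.2 ⟨Finset.mem_univ _, by
        simp⟩, ?_⟩
      apply Fin.ext
      simp
  rw [hbij, Finset.card_univ, Fintype.card_fin]

lemma card_filter_fin_lt (n : ℕ) (hn : n ≤ e) :
    (Finset.univ.filter fun c : Fin e => (c : ℕ) < n).card = n := by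
  classical
  have hbij : (Finset.univ.filter fun c : Fin e => (c : ℕ) < n).card
      = (Finset.univ : Finset (Fin n)).card := by
    refine Finset.card_bij (fun c hc => (⟨(c : ℕ), (Finset.mem_filter.1 hc).2⟩ : Fin n)) ?_ ?_ ?_
    · intro a ha; exact Finset.mem_univ _
    · intro a₁ ha₁ a₂ ha₂ heq
      have := congrArg Fin.val heq
      simp only at this
      exact Fin.ext this
    · intro q _
      exact ⟨⟨(q : ℕ), by omega⟩, Finset.mem_filter.2 ⟨Finset.mem_univ _, q.2⟩, rfl⟩
  rw [hbij, Finset.card_univ, Fintype.card_fin]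

lemma finrank_span_basis_image (S : Set (Fin h × Fin e)) :
    Module.finrank k (Submodule.span k (b '' S)) = Nat.card S := by
  classical
  haveI : Fintype ↥S := S.toFinite.fintype
  haveI : Fintype ↥(b '' S) := (S.toFinite.image b).fintype
  have hcomp : LinearIndependent k (b ∘ ((↑) : S → Fin h × Fin e)) :=
    b.linearIndependent.comp _ Subtype.val_injective
  have hset : Set.range (b ∘ ((↑) : S → Fin h × Fin e)) = b '' S := by
    rw [Set.range_comp, Subtype.range_coe]
  have hli : LinearIndependent k ((↑) : ↥(b '' S) → E) := by
    have := hcomp.linearIndepOn_id.linearIndependent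
    exact hset ▸ this
  rw [finrank_span_set_eq_card hli]
  rw [Set.toFinset_image, Finset.card_image_of_injective _ b.injective]
  rw [Set.toFinset_card, Nat.card_eq_fintype_card]

lemma finrank_Usub (n : ℕ) (hn : n ≤ e) :
    Module.finrank k (Usub b n) = h * n := by
  classical
  rw [Usub, finrank_span_basis_image b]
  have : {p : Fin h × Fin e | (p.2 : ℕ) < n}
      = ↑(Finset.univ.filter fun p : Fin h × Fin e => (p.2 : ℕ) < n) := by
    ext p; simp
  rw [this, Nat.card_coe_set_eq, Set.ncard_coe_finset]
  have hprod : (Finset.univ.filter fun p : Fin h × Fin e => (p.2 : ℕ) < n)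
      = (Finset.univ : Finset (Fin h)) ×ˢ (Finset.univ.filter fun c : Fin e => (c : ℕ) < n) := by
    ext p
    simp [Finset.mem_product]
  rw [hprod, Finset.card_product, Finset.card_univ, Fintype.card_fin,
    card_filter_fin_lt n hn]

lemma finrank_Wsub (n : ℕ) :
    Module.finrank k (Wsub b n) = h * (e - n) := by
  classical
  rw [Wsub, finrank_span_basis_image b]
  have : {p : Fin h × Fin e | n ≤ (p.2 : ℕ)}
      = ↑(Finset.univ.filter fun p : Fin h × Fin e => n ≤ (p.2 : ℕ)) := by
    ext p; simp
  rw [this, Nat.card_coe_set_eq, Set.ncard_coe_finset]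
  have hprod : (Finset.univ.filter fun p : Fin h × Fin e => n ≤ (p.2 : ℕ))
      = (Finset.univ : Finset (Fin h)) ×ˢ (Finset.univ.filter fun c : Fin e => n ≤ (c : ℕ)) := by
    ext p
    simp [Finset.mem_product]
  rw [hprod, Finset.card_product, Finset.card_univ, Fintype.card_fin,
    card_filter_fin_ge n]

end Stmt4Aux


end Stmt4AuxSec

open Stmt4Aux


/-- fibre over a point of S: Let `E` be a free `k[T]/(Q(T))`-module of rank
`h`, with `Q = ∏_{i=1}^e (T − π_i)` (freeness encoded by the basis `b (i,j)` of the
elements `∏_{i'≤j}(T−π_{i'})`, on which `t`, the action of `T`, acts by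
`t b(i,j) = π_j • b(i,j) + b(i,j+1)`).  Let `N^{[0]} = 0 ⊆ N^{[1]} ⊆ … ⊆ N^{[e]}` be a
Pappas–Rapoport filtration: `rank (N^[j]/N^[j−1]) = d_j` (encoded cumulatively) and
`(T − π_j) N^[j] ⊆ N^[j−1]`.  Define `N^{[2e−ℓ]} := (Q^ℓ(T))^{-1}(N^{[ℓ]})` with
`Q^ℓ = ∏_{i>ℓ}(T−π_i)`.  Then for `1 ≤ j ≤ e−1`, `N^{[e+j]}` is (locally) free of rank
`jh + d_1 + ⋯ + d_{e−j}` and `(T − π_{e−j+1}) N^{[e+j]} ⊆ N^{[e+j−1]}`. -/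
theorem stmt_4 (k : Type*) [Field k]
    (E : Type*) [AddCommGroup E] [Module k E]
    (e h : ℕ) (he : 1 ≤ e) (π : Fin e → k) (d : Fin e → ℕ)
    (t : E →ₗ[k] E)
    (b : Module.Basis (Fin h × Fin e) k E)
    (hb : ∀ (i : Fin h) (j : Fin e),
      t (b (i, j)) = π j • b (i, j) +
        (if hj : (j : ℕ) + 1 < e then b (i, ⟨(j : ℕ) + 1, hj⟩) else 0))
    (N : ℕ → Submodule k E)
    (hN0 : N 0 = ⊥)
    (hmono : ∀ j, j < e → N j ≤ N (j + 1))
    (hrank : ∀ j, j ≤ e → Module.finrank k (N j) =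
      ∑ i ∈ Finset.univ.filter (fun i : Fin e => (i : ℕ) < j), d i)
    (hstep : ∀ (j : ℕ) (hj : j < e), ∀ x ∈ N (j + 1), t x - π ⟨j, hj⟩ • x ∈ N j)
    (j : ℕ) (hj1 : 1 ≤ j) (hje : j ≤ e - 1) :
    Module.finrank k
        (Submodule.comap
          (Polynomial.aeval t (∏ i ∈ Finset.univ.filter (fun i : Fin e => e - j ≤ (i : ℕ)),
            (Polynomial.X - Polynomial.C (π i))))
          (N (e - j)))
      = j * h + ∑ i ∈ Finset.univ.filter (fun i : Fin e => (i : ℕ) < e - j), d i ∧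
    ∀ x ∈ Submodule.comap
          (Polynomial.aeval t (∏ i ∈ Finset.univ.filter (fun i : Fin e => e - j ≤ (i : ℕ)),
            (Polynomial.X - Polynomial.C (π i))))
          (N (e - j)),
      t x - π ⟨e - j, by omega⟩ • x ∈
        Submodule.comap
          (Polynomial.aeval t (∏ i ∈ Finset.univ.filter (fun i : Fin e => e - j + 1 ≤ (i : ℕ)),
            (Polynomial.X - Polynomial.C (π i))))
          (N (e - j + 1)) := by
  have he2 : 2 ≤ e := by omega
  have hℓe : e - j < e := by omega
  haveI : FiniteDimensional k E := Module.Finite.of_basis b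
  set f : E →ₗ[k] E := aeval t (Rp π (e - j)) with hf
  -- triangularity for f
  have hcardR : (Finset.univ.filter fun c : Fin e => (e - j) ≤ (c : ℕ)).card = j := by
    rw [card_filter_fin_ge]; omega
  have hgf : ∀ (i : Fin h) (m : ℕ) (hm : m < e),
      f (b (i, ⟨m, hm⟩)) - Bv b i (m + j) ∈ Usub b (m + j) := by
    intro i m hm
    have := tri b hb (Finset.univ.filter fun c : Fin e => (e - j) ≤ (c : ℕ)) i m hm
    rwa [hcardR] at this
  have hinjf := inj b f j hgf (e - j) (by omega)
  -- rank lower bound for range f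
  have hrange1 : h * (e - j) ≤ Module.finrank k (LinearMap.range f) := by
    set f' := f.domRestrict (Usub b (e - j)) with hf'
    have hker : LinearMap.ker f' = ⊥ := by
      rw [eq_bot_iff]
      intro m hm
      have h0 : f m.1 = 0 := hm
      have := hinjf m.1 m.2 h0
      rw [Submodule.mem_bot]
      exact Subtype.ext this
    have h1 := LinearMap.finrank_range_add_finrank_ker f'
    rw [hker, finrank_bot, add_zero] at h1
    have h2 : Module.finrank k (Usub b (e - j)) = h * (e - j) :=
      finrank_Usub b (e - j) (by omega)
    have h3 : LinearMap.range f' ≤ LinearMap.range f := by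
      rw [hf', LinearMap.range_domRestrict]
      exact LinearMap.map_le_range
    calc h * (e - j) = Module.finrank k (LinearMap.range f') := by rw [h1, h2]
      _ ≤ Module.finrank k (LinearMap.range f) := Submodule.finrank_mono h3
  have hkerW : Wsub b (e - j) ≤ LinearMap.ker f := fun x hx =>
    LinearMap.mem_ker.2 (aeval_Rp_zero_aux b hb j (e - j) (by omega) x hx)
  have hker1 : h * j ≤ Module.finrank k (LinearMap.ker f) := by
    have h1 := Submodule.finrank_mono hkerW
    rw [finrank_Wsub b (e - j)] at h1
    have : e - (e - j) = j := by omega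
    rwa [this] at h1
  have hrn := LinearMap.finrank_range_add_finrank_ker f
  have hE : Module.finrank k E = h * e := by
    rw [Module.finrank_eq_card_basis b, Fintype.card_prod, Fintype.card_fin, Fintype.card_fin]
  have hmul : h * e = h * (e - j) + h * j := by
    rw [← Nat.mul_add]
    congr 1
    omega
  have hrange : Module.finrank k (LinearMap.range f) = h * (e - j) := by omega
  have hkerf : Module.finrank k (LinearMap.ker f) = h * j := by omega
  -- second map
  set f2 : E →ₗ[k] E := aeval t (Lp π (e - j)) with hf2
  have hcardL : (Finset.univ.filter fun c : Fin e => (c : ℕ) < e - j).card = e - j :=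
    card_filter_fin_lt (e - j) (by omega)
  have hgf2 : ∀ (i : Fin h) (m : ℕ) (hm : m < e),
      f2 (b (i, ⟨m, hm⟩)) - Bv b i (m + (e - j)) ∈ Usub b (m + (e - j)) := by
    intro i m hm
    have := tri b hb (Finset.univ.filter fun c : Fin e => (c : ℕ) < e - j) i m hm
    rwa [hcardL] at this
  have hinjf2 := inj b f2 (e - j) hgf2 j (by omega)
  have hrange2 : h * j ≤ Module.finrank k (LinearMap.range f2) := by
    set f2' := f2.domRestrict (Usub b j) with hf2'
    have hker : LinearMap.ker f2' = ⊥ := by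
      rw [eq_bot_iff]
      intro m hm
      have h0 : f2 m.1 = 0 := hm
      have := hinjf2 m.1 m.2 h0
      rw [Submodule.mem_bot]
      exact Subtype.ext this
    have h1 := LinearMap.finrank_range_add_finrank_ker f2'
    rw [hker, finrank_bot, add_zero] at h1
    have h2 : Module.finrank k (Usub b j) = h * j := finrank_Usub b j (by omega)
    have h3 : LinearMap.range f2' ≤ LinearMap.range f2 := by
      rw [hf2', LinearMap.range_domRestrict]
      exact LinearMap.map_le_range
    calc h * j = Module.finrank k (LinearMap.range f2') := by rw [h1, h2]
      _ ≤ Module.finrank k (LinearMap.range f2) := Submodule.finrank_mono h3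
  have hrn2 := LinearMap.finrank_range_add_finrank_ker f2
  have hker2 : Module.finrank k (LinearMap.ker f2) ≤ h * (e - j) := by omega
  have hsub : LinearMap.range f ≤ LinearMap.ker f2 := by
    rintro _ ⟨x, rfl⟩
    refine LinearMap.mem_ker.2 ?_
    rw [hf2, hf, ← aeval_mul_apply, Rp_zero_eq]
    exact aeval_Rp_zero b hb x
  have heq : LinearMap.range f = LinearMap.ker f2 :=
    Submodule.eq_of_le_of_finrank_le hsub (by rw [hrange]; exact hker2)
  have hNrange : N (e - j) ≤ LinearMap.range f := by
    rw [heq]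
    intro x hx
    exact LinearMap.mem_ker.2 (aeval_Lp_N N hN0 hstep (e - j) (by omega) x hx)
  constructor
  · show Module.finrank k (Submodule.comap f (N (e - j))) = _
    set C := Submodule.comap f (N (e - j)) with hC
    set g' := f.domRestrict C with hg'
    have hfr := LinearMap.finrank_range_add_finrank_ker g'
    have e1 : Module.finrank k (LinearMap.range g') = Module.finrank k (N (e - j)) := by
      rw [hg', LinearMap.range_domRestrict, hC, Submodule.map_comap_eq, inf_eq_right.2 hNrange]
    have hle : LinearMap.ker f ≤ C := by
      intro x hx
      rw [hC]
      simp only [Submodule.mem_comap, LinearMap.mem_ker.1 hx]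
      exact zero_mem _
    have e2 : Module.finrank k (LinearMap.ker g') = Module.finrank k (LinearMap.ker f) := by
      rw [hg', LinearMap.ker_domRestrict]
      exact (Submodule.comapSubtypeEquivOfLe hle).finrank_eq
    have hNr := hrank (e - j) (by omega)
    rw [e1, e2, hkerf, hNr] at hfr
    rw [← hfr]
    ring
  · intro x hx
    simp only [Submodule.mem_comap] at hx ⊢
    have h1 : (aeval t (Rp π (e - j + 1))) (t x - π ⟨e - j, hℓe⟩ • x)
        = (aeval t (Rp π (e - j))) x := by
      rw [← aeval_lin (π ⟨e - j, hℓe⟩) x, ← aeval_mul_apply, mul_comm, ← Rp_succ hℓe]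
    show (aeval t (Rp π (e - j + 1))) (t x - π ⟨e - j, hℓe⟩ • x) ∈ N (e - j + 1)
    rw [h1]
    exact hmono (e - j) hℓe hx
end

section
/- Let M be a free k[[X]]-module of rank 2g with a perfect alternating k[[X]]-bilinear pairing, N ⊆ M a totally isotropic direct summand of rank g, and L̄ a totally isotropic g-dimensional k-subspace of M/XM. If the field k is infinite (or char k ≠ 2 and k admits an invertible symmetric g×g matrix, which always holds), then there exists a totally isotropic direct summand L ⊆ M of rank g lifting L̄ such that (L ∩ N) ⊗ k((X)) = 0. -/
open PowerSeries Module

namespace Stmt7Aux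

variable {k : Type*} [Field k] {m : ℕ}

noncomputable abbrev σk (k : Type*) [Field k] : PowerSeries k →+* k := PowerSeries.constantCoeff (R := k)

instance : RingHomSurjective (σk k) := ⟨fun x => ⟨PowerSeries.C (R := k) x, by simp⟩⟩

/-- componentwise reduction, a `σ`-semilinear map. -/
noncomputable def red (k : Type*) [Field k] (m : ℕ) :
    (Fin m → PowerSeries k) →ₛₗ[σk k] (Fin m → k) where
  toFun x := fun i => PowerSeries.constantCoeff (R := k) (x i)
  map_add' x y := by funext i; simp
  map_smul' a x := by funext i; simp [Pi.smul_apply, smul_eq_mul]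

@[simp] lemma red_apply (x : Fin m → PowerSeries k) (i : Fin m) :
    red k m x i = PowerSeries.constantCoeff (R := k) (x i) := rfl

lemma red_eq_zero_iff (x : Fin m → PowerSeries k) :
    red k m x = 0 ↔ ∃ u, x = (PowerSeries.X : PowerSeries k) • u := by
  constructor
  · intro h
    have hx : ∀ i, (PowerSeries.X : PowerSeries k) ∣ x i := by
      intro i
      rw [PowerSeries.X_dvd_iff]
      exact congrFun h i
    refine ⟨fun i => (hx i).choose, funext fun i => ?_⟩
    simpa [Pi.smul_apply, smul_eq_mul] using (hx i).choose_spec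
  · rintro ⟨u, rfl⟩
    funext i
    simp [Pi.smul_apply, smul_eq_mul]

/-- the section `k → k[[X]]` applied componentwise -/
noncomputable def liftC (x : Fin m → k) : Fin m → PowerSeries k := fun i => PowerSeries.C (R := k) (x i)

@[simp] lemma red_liftC (x : Fin m → k) : red k m (liftC x) = x := by
  funext i; simp [liftC]

lemma liftC_add (x y : Fin m → k) : liftC (x + y) = liftC x + liftC y := by
  funext i; simp [liftC]

lemma liftC_smul (a : k) (x : Fin m → k) :
    liftC (a • x) = (PowerSeries.C (R := k) a) • liftC x := by
  funext i; simp [liftC, smul_eq_mul]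

variable (B : (Fin m → PowerSeries k) →ₗ[PowerSeries k]
    Module.Dual (PowerSeries k) (Fin m → PowerSeries k))

lemma skew (halt : ∀ x, B x x = 0) (x y : Fin m → PowerSeries k) : B x y = - B y x := by
  have h := halt (x + y)
  simp only [map_add, LinearMap.add_apply, halt] at h
  linear_combination h


/-- the reduced pairing on `k^m`. -/
noncomputable def Bbar : (Fin m → k) →ₗ[k] (Fin m → k) →ₗ[k] k :=
  LinearMap.mk₂ k (fun a b => PowerSeries.constantCoeff (R := k) (B (liftC a) (liftC b)))
    (fun a a' b => by simp only [liftC_add]; simp)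
    (fun c a b => by simp only [liftC_smul]; simp [smul_eq_mul])
    (fun a b b' => by simp only [liftC_add]; simp)
    (fun c a b => by simp only [liftC_smul]; simp [smul_eq_mul])

lemma Bbar_apply (a b : Fin m → k) :
    Bbar B a b = PowerSeries.constantCoeff (R := k) (B (liftC a) (liftC b)) := rfl

lemma const_B_eq_zero_left (x y : Fin m → PowerSeries k) (hx : red k m x = 0) :
    PowerSeries.constantCoeff (R := k) (B x y) = 0 := by
  obtain ⟨u, rfl⟩ := (red_eq_zero_iff x).1 hx
  simp [smul_eq_mul]

lemma const_B_eq_zero_right (x y : Fin m → PowerSeries k) (hy : red k m y = 0) :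
    PowerSeries.constantCoeff (R := k) (B x y) = 0 := by
  obtain ⟨u, rfl⟩ := (red_eq_zero_iff y).1 hy
  simp [smul_eq_mul]

/-- compatibility: the reduction of `B x y` only depends on the reductions of `x`, `y`. -/
lemma Bbar_red (x y : Fin m → PowerSeries k) :
    Bbar B (red k m x) (red k m y) = PowerSeries.constantCoeff (R := k) (B x y) := by
  rw [Bbar_apply]
  have hx : red k m (x - liftC (red k m x)) = 0 := by
    rw [map_sub, red_liftC, sub_self]
  have hy : red k m (y - liftC (red k m y)) = 0 := by
    rw [map_sub, red_liftC, sub_self]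
  have e1 : PowerSeries.constantCoeff (R := k) (B x y)
      = PowerSeries.constantCoeff (R := k) (B (liftC (red k m x)) y) := by
    have h0 := const_B_eq_zero_left B (x - liftC (red k m x)) y hx
    simp only [map_sub, LinearMap.sub_apply, map_sub] at h0
    exact sub_eq_zero.mp h0
  have e2 : PowerSeries.constantCoeff (R := k) (B (liftC (red k m x)) y)
      = PowerSeries.constantCoeff (R := k) (B (liftC (red k m x)) (liftC (red k m y))) := by
    have h0 := const_B_eq_zero_right B (liftC (red k m x)) (y - liftC (red k m y)) hy
    simp only [map_sub, LinearMap.sub_apply, map_sub] at h0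
    exact sub_eq_zero.mp h0
  rw [e1, e2]

lemma Bbar_alt (halt : ∀ x, B x x = 0) (a : Fin m → k) : Bbar B a a = 0 := by
  rw [Bbar_apply, halt]; simp

lemma Bbar_skew (halt : ∀ x, B x x = 0) (a b : Fin m → k) : Bbar B a b = - Bbar B b a := by
  rw [Bbar_apply, Bbar_apply, skew B halt]; simp


section Free

instance instNoetherianPi : IsNoetherian (PowerSeries k) (Fin m → PowerSeries k) := by
  infer_instance

noncomputable instance freeSubmodule (V : Submodule (PowerSeries k) (Fin m → PowerSeries k)) :
    Module.Free (PowerSeries k) ↥V := by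
  have : Module.Finite (PowerSeries k) ↥V := IsNoetherian.finite _ _
  exact Module.free_of_finite_type_torsion_free'

end Free

/-- lifting a functional mod `X` to a functional on a submodule of the power series module. -/
lemma lift_dual (V : Submodule (PowerSeries k) (Fin m → PowerSeries k))
    (χ : Module.Dual k (Fin m → k)) :
    ∃ φ : Module.Dual (PowerSeries k) ↥V,
      ∀ u : ↥V, PowerSeries.constantCoeff (R := k) (φ u) = χ (red k m ↑u) := by
  have : Module.Finite (PowerSeries k) ↥V := IsNoetherian.finite _ _
  let b := Module.Free.chooseBasis (PowerSeries k) ↥V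
  refine ⟨b.constr (PowerSeries k) (fun i => PowerSeries.C (R := k) (χ (red k m ↑(b i)))), ?_⟩
  let F₁ : ↥V →ₛₗ[σk k] k :=
    ((σk k).toSemilinearMap).comp (b.constr (PowerSeries k)
      (fun i => PowerSeries.C (R := k) (χ (red k m ↑(b i)))))
  let F₂ : ↥V →ₛₗ[σk k] k := χ.comp ((red k m).comp V.subtype)
  have hext : F₁ = F₂ := by
    apply b.ext
    intro i
    show PowerSeries.constantCoeff (R := k) _ = χ (red k m ↑(b i))
    rw [Basis.constr_basis]
    simp
  intro u
  exact LinearMap.congr_fun hext u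

/-- reduction of a direct summand: rank equality. -/
lemma finrank_red_of_summand (V C : Submodule (PowerSeries k) (Fin m → PowerSeries k))
    (h1 : V ⊓ C = ⊥) (h2 : V ⊔ C = ⊤) :
    Module.finrank k ↥(V.map (red k m)) = Module.finrank (PowerSeries k) ↥V := by
  haveI : Module.Finite (PowerSeries k) ↥V := IsNoetherian.finite _ _
  set n := Module.finrank (PowerSeries k) ↥V with hn
  let b : Basis (Fin n) (PowerSeries k) ↥V := Module.finBasis (PowerSeries k) ↥V
  set v : Fin n → (Fin m → k) := fun i => red k m ((b i : Fin m → PowerSeries k)) with hv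
  have hli : LinearIndependent k v := by
    rw [Fintype.linearIndependent_iff]
    intro g hg
    set xV : ↥V := ∑ i, (PowerSeries.C (R := k) (g i)) • b i with hxV
    have hredx : red k m (xV : Fin m → PowerSeries k) = 0 := by
      have hco : ((xV : Fin m → PowerSeries k))
          = ∑ i, (PowerSeries.C (R := k) (g i)) • ((b i : Fin m → PowerSeries k)) := by
        rw [hxV]
        push_cast
        rfl
      rw [hco, map_sum]
      have : ∀ i, red k m ((PowerSeries.C (R := k) (g i)) • ((b i : Fin m → PowerSeries k)))
          = g i • v i := by
        intro i
        rw [LinearMap.map_smulₛₗ]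
        simp [hv]
      simp only [this]
      exact hg
    obtain ⟨u, hu⟩ := (red_eq_zero_iff _).1 hredx
    have huV : u ∈ V := by
      have hutop : u ∈ V ⊔ C := by rw [h2]; trivial
      obtain ⟨a, ha, c, hc, hac⟩ := Submodule.mem_sup.1 hutop
      have hXc : (PowerSeries.X : PowerSeries k) • c ∈ V ⊓ C := by
        constructor
        · have hh : (PowerSeries.X : PowerSeries k) • c
              = (xV : Fin m → PowerSeries k) - (PowerSeries.X : PowerSeries k) • a := by
            rw [hu, ← hac, smul_add]
            abel
          rw [hh]
          exact sub_mem xV.2 (Submodule.smul_mem _ _ ha)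
        · exact Submodule.smul_mem _ _ hc
      rw [h1] at hXc
      have hc0 : c = 0 := by
        have hb := (Submodule.mem_bot _).1 hXc
        have hX : (PowerSeries.X : PowerSeries k) ≠ 0 := PowerSeries.X_ne_zero
        exact (smul_eq_zero.1 hb).resolve_left hX
      rw [← hac, hc0, add_zero]; exact ha
    have hxVu : xV = (PowerSeries.X : PowerSeries k) • (⟨u, huV⟩ : ↥V) := by
      apply Subtype.ext
      simpa using hu
    intro i
    have hrepr : b.repr xV i = PowerSeries.C (R := k) (g i) := by
      rw [hxV]
      have := Basis.repr_sum_self b (fun j => PowerSeries.C (R := k) (g j))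
      rw [this]
    have hrepr2 : b.repr xV i
        = (PowerSeries.X : PowerSeries k) * b.repr (⟨u, huV⟩ : ↥V) i := by
      rw [hxVu, map_smul]; simp [smul_eq_mul]
    have hXr : PowerSeries.C (R := k) (g i)
        = (PowerSeries.X : PowerSeries k) * b.repr (⟨u, huV⟩ : ↥V) i := by
      rw [← hrepr, hrepr2]
    have := congrArg (PowerSeries.constantCoeff (R := k)) hXr
    simpa using this
  have hspan : V.map (red k m) = Submodule.span k (Set.range v) := by
    have hVspan : V = Submodule.span (PowerSeries k)
        (Set.range (fun i => ((b i : Fin m → PowerSeries k)))) := by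
      conv_lhs => rw [← Submodule.map_subtype_top V]
      rw [← b.span_eq, Submodule.map_span]
      congr 1
      ext x
      simp
    rw [hVspan, Submodule.map_span]
    congr 1
    ext x
    constructor
    · rintro ⟨y, ⟨i, rfl⟩, rfl⟩; exact ⟨i, rfl⟩
    · rintro ⟨i, rfl⟩; exact ⟨(b i : Fin m → PowerSeries k), ⟨i, rfl⟩, rfl⟩
  rw [hspan, finrank_span_eq_card hli]
  simp


section Key

variable (B : (Fin m → PowerSeries k) →ₗ[PowerSeries k]
    Module.Dual (PowerSeries k) (Fin m → PowerSeries k))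

/-- The statement of the key induction. -/
def KeyStmt (n : ℕ) : Prop :=
  ∀ (V N : Submodule (PowerSeries k) (Fin m → PowerSeries k)) (Lb : Submodule k (Fin m → k)),
    N ≤ V →
    Lb ≤ V.map (red k m) →
    (∀ φ : Module.Dual (PowerSeries k) ↥V, ∃ v : ↥V, ∀ u : ↥V, B ↑v ↑u = φ u) →
    Module.finrank k ↥(V.map (red k m)) = 2 * n →
    Module.finrank k ↥(N.map (red k m)) = n →
    Module.finrank k ↥Lb = n →
    (∀ x ∈ N, ∀ y ∈ N, B x y = 0) →
    (∀ a ∈ Lb, ∀ b ∈ Lb, Bbar B a b = 0) →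
    ∃ L : Submodule (PowerSeries k) (Fin m → PowerSeries k),
      L ≤ V ∧ (∃ C, L ⊓ C = ⊥ ∧ L ⊔ C = V) ∧ L.map (red k m) = Lb ∧
      (∀ x ∈ L, ∀ y ∈ L, B x y = 0) ∧ L ⊓ N = ⊥

set_option maxHeartbeats 1000000 in
set_option synthInstance.maxHeartbeats 1000000 in
lemma key_step (halt : ∀ x, B x x = 0) (n : ℕ)
    (V N : Submodule (PowerSeries k) (Fin m → PowerSeries k)) (Lb : Submodule k (Fin m → k))
    (h1 : N ≤ V)
    (h2 : Lb ≤ V.map (red k m))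
    (h5 : ∀ φ : Module.Dual (PowerSeries k) ↥V, ∃ v : ↥V, ∀ u : ↥V, B ↑v ↑u = φ u)
    (h6 : Module.finrank k ↥(V.map (red k m)) = 2 * (n+1))
    (h7 : Module.finrank k ↥(N.map (red k m)) = n+1)
    (h8 : Module.finrank k ↥Lb = n+1)
    (h9 : ∀ x ∈ N, ∀ y ∈ N, B x y = 0)
    (h10 : ∀ a ∈ Lb, ∀ b ∈ Lb, Bbar B a b = 0)
    (IH : KeyStmt B n)
    (w y z t e : Fin m → PowerSeries k)
    (hwV : w ∈ V) (hyV : y ∈ V)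
    (hwy : B w y = 1)
    (hwred : red k m w ∈ Lb)
    (hzN : z ∈ N)
    (ht : t = w ∨ t = y)
    (htz : IsUnit (PowerSeries.constantCoeff (R := k) (B t z)))
    (hE : (z = w ∧ e = w + (PowerSeries.X : PowerSeries k) • y) ∨ (z = y ∧ e = w)) :
    ∃ L : Submodule (PowerSeries k) (Fin m → PowerSeries k),
      L ≤ V ∧ (∃ C, L ⊓ C = ⊥ ∧ L ⊔ C = V) ∧ L.map (red k m) = Lb ∧
      (∀ x ∈ L, ∀ y ∈ L, B x y = 0) ∧ L ⊓ N = ⊥ := by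
  classical
  have hByw : B y w = -1 := by rw [skew B halt, hwy]
  -- the projection onto the "perp of the hyperbolic plane"
  set pr : (Fin m → PowerSeries k) →ₗ[PowerSeries k] (Fin m → PowerSeries k) :=
    LinearMap.id - ((B w).smulRight y) + ((B y).smulRight w) with hprdef
  have hpr_apply : ∀ v, pr v = v - (B w v) • y + (B y v) • w := by
    intro v
    simp [hprdef, LinearMap.sub_apply, LinearMap.add_apply, LinearMap.smulRight_apply]
  have hBpr : ∀ v u, B (pr v) u = B v u - (B w v) * (B y u) + (B y v) * (B w u) := by
    intro v u
    rw [hpr_apply]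
    simp [map_sub, map_add, map_smul, smul_eq_mul]
  have hBw_pr : ∀ v, B w (pr v) = 0 := by
    intro v
    rw [hpr_apply]
    simp [map_sub, map_add, map_smul, smul_eq_mul, hwy, halt]
  have hBy_pr : ∀ v, B y (pr v) = 0 := by
    intro v
    rw [hpr_apply]
    simp [map_sub, map_add, map_smul, smul_eq_mul, hByw, halt]
  have hprw : pr w = 0 := by
    rw [hpr_apply, halt, hByw]
    simp
  have hpry : pr y = 0 := by
    rw [hpr_apply, halt, hwy]
    simp
  have hprid : ∀ v, B w v = 0 → B y v = 0 → pr v = v := by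
    intro v hv1 hv2
    rw [hpr_apply, hv1, hv2]
    simp
  have hpre : pr e = 0 := by
    rcases hE with ⟨hz, he⟩ | ⟨hz, he⟩ <;> subst he <;>
      simp [map_add, map_smul, hprw, hpry]
  set M' : Submodule (PowerSeries k) (Fin m → PowerSeries k) :=
    V ⊓ LinearMap.ker (B w) ⊓ LinearMap.ker (B y) with hM'def
  have hM'le : M' ≤ V := fun x hx => hx.1.1
  have mem_M' : ∀ v, v ∈ M' ↔ v ∈ V ∧ B w v = 0 ∧ B y v = 0 := by
    intro v
    simp only [hM'def, Submodule.mem_inf, LinearMap.mem_ker]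
    tauto
  have hprVM' : ∀ v ∈ V, pr v ∈ M' := by
    intro v hv
    rw [mem_M']
    refine ⟨?_, hBw_pr v, hBy_pr v⟩
    rw [hpr_apply]
    exact add_mem (sub_mem hv (Submodule.smul_mem _ _ hyV)) (Submodule.smul_mem _ _ hwV)
  have hprM'id : ∀ v ∈ M', pr v = v := fun v hv =>
    hprid v ((mem_M' v).1 hv).2.1 ((mem_M' v).1 hv).2.2
  set N' : Submodule (PowerSeries k) (Fin m → PowerSeries k) := N ⊓ M' with hN'def
  have hpN : ∀ nn ∈ N, pr nn ∈ N := by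
    intro nn hnn
    rw [hpr_apply]
    rcases hE with ⟨hzw, _⟩ | ⟨hzy, _⟩
    · have h0 : B w nn = 0 := h9 w (hzw ▸ hzN) nn hnn
      rw [h0]
      simpa using add_mem hnn (Submodule.smul_mem _ (B y nn) (hzw ▸ hzN))
    · have h0 : B y nn = 0 := h9 y (hzy ▸ hzN) nn hnn
      rw [h0]
      simpa using sub_mem hnn (Submodule.smul_mem _ (B w nn) (hzy ▸ hzN))
  have hsubz : ∀ nn ∈ N, nn - pr nn ∈ Submodule.span (PowerSeries k) {z} := by
    intro nn hnn
    rw [hpr_apply]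
    rcases hE with ⟨hzw, _⟩ | ⟨hzy, _⟩
    · have h0 : B w nn = 0 := h9 w (hzw ▸ hzN) nn hnn
      rw [h0]
      rw [Submodule.mem_span_singleton]
      refine ⟨-(B y nn), ?_⟩
      rw [← hzw]
      simp only [zero_smul, sub_zero, add_zero, neg_smul]
      abel
    · have h0 : B y nn = 0 := h9 y (hzy ▸ hzN) nn hnn
      rw [h0]
      rw [Submodule.mem_span_singleton]
      refine ⟨B w nn, ?_⟩
      rw [← hzy]
      simp only [zero_smul, sub_zero, add_zero, neg_smul]
      abel
  have hNsplit : N = Submodule.span (PowerSeries k) {z} ⊔ N' := by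
    apply le_antisymm
    · intro nn hnn
      have hdec : nn = (nn - pr nn) + pr nn := by abel
      rw [hdec]
      exact add_mem (Submodule.mem_sup_left (hsubz nn hnn))
        (Submodule.mem_sup_right ⟨hpN nn hnn, hprVM' nn (h1 hnn)⟩)
    · exact sup_le ((Submodule.span_singleton_le_iff_mem _ _).2 hzN) inf_le_left
  -- reductions
  set wb : Fin m → k := red k m w with hwb
  set yb : Fin m → k := red k m y with hyb
  set zb : Fin m → k := red k m z with hzb
  set tb : Fin m → k := red k m t with htb
  have hBbar_wy : Bbar B wb yb = 1 := by rw [hwb, hyb, Bbar_red, hwy]; simp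
  have hBbar_yw : Bbar B yb wb = -1 := by rw [hwb, hyb, Bbar_red, hByw]; simp
  have hBbar_ww : Bbar B wb wb = 0 := Bbar_alt B halt wb
  have hBbar_yy : Bbar B yb yb = 0 := Bbar_alt B halt yb
  have hwbne : wb ≠ 0 := by
    intro h0
    rw [h0] at hBbar_wy
    simp at hBbar_wy
  have hybne : yb ≠ 0 := by
    intro h0
    rw [h0] at hBbar_wy
    simp at hBbar_wy
  set prbar : (Fin m → k) →ₗ[k] (Fin m → k) :=
    LinearMap.id - ((Bbar B wb).smulRight yb) + ((Bbar B yb).smulRight wb) with hprbardef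
  have hprbar_apply : ∀ v, prbar v = v - (Bbar B wb v) • yb + (Bbar B yb v) • wb := by
    intro v
    simp [hprbardef, LinearMap.sub_apply, LinearMap.add_apply, LinearMap.smulRight_apply]
  have hred_pr : ∀ v, red k m (pr v) = prbar (red k m v) := by
    intro v
    rw [hpr_apply, hprbar_apply]
    simp only [map_add, map_sub, LinearMap.map_smulₛₗ]
    rw [hwb, hyb, Bbar_red, Bbar_red]
  have htM' : ∀ v ∈ M', PowerSeries.constantCoeff (R := k) (B t v) = 0 := by
    intro v hv
    rcases ht with rfl | rfl
    · rw [((mem_M' v).1 hv).2.1]; simp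
    · rw [((mem_M' v).1 hv).2.2]; simp
  have htzb : Bbar B tb zb ≠ 0 := by
    rw [htb, hzb, Bbar_red]
    exact htz.ne_zero
  have hzbne : zb ≠ 0 := by
    intro h0
    rw [h0] at htzb
    simp at htzb
  set Lb' : Submodule k (Fin m → k) := Lb.map prbar with hLb'def
  have h2' : Lb' ≤ M'.map (red k m) := by
    rintro _ ⟨a, haLb, rfl⟩
    obtain ⟨u, huV, hu⟩ := h2 haLb
    exact ⟨pr u, hprVM' u huV, by rw [hred_pr, hu]⟩
  have h1' : N' ≤ M' := inf_le_right
  have h5' : ∀ φ : Module.Dual (PowerSeries k) ↥M', ∃ v : ↥M', ∀ u : ↥M', B ↑v ↑u = φ u := by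
    intro φ'
    have hres : ∀ x ∈ V, pr x ∈ M' := hprVM'
    obtain ⟨v, hv⟩ := h5 (φ'.comp ((pr.restrict hres : ↥V →ₗ[PowerSeries k] ↥M')))
    refine ⟨⟨pr ↑v, hprVM' ↑v v.2⟩, ?_⟩
    intro u'
    have hu'V : (↑u' : Fin m → PowerSeries k) ∈ V := hM'le u'.2
    have h := hv ⟨↑u', hu'V⟩
    have hmem := (mem_M' (↑u' : Fin m → PowerSeries k)).1 u'.2
    have hLHS : B (pr ↑v) ↑u' = B (↑v : Fin m → PowerSeries k) ↑u' := by
      rw [hBpr, hmem.2.1, hmem.2.2]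
      ring
    rw [hLHS, h]
    show φ' ((pr.restrict hres : ↥V →ₗ[PowerSeries k] ↥M') ⟨↑u', hu'V⟩) = φ' u'
    congr 1
    apply Subtype.ext
    exact hprM'id ↑u' u'.2
  -- dimension of the reduction of M'
  have hsupV : V.map (red k m)
      = (Submodule.span k {wb} ⊔ Submodule.span k {yb}) ⊔ M'.map (red k m) := by
    apply le_antisymm
    · rintro _ ⟨v, hvV, rfl⟩
      have hdec : red k m v = (Bbar B wb (red k m v)) • yb - (Bbar B yb (red k m v)) • wb
          + red k m (pr v) := by
        rw [hred_pr, hprbar_apply]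
        abel
      rw [hdec]
      refine add_mem (sub_mem ?_ ?_) (Submodule.mem_sup_right ⟨pr v, hprVM' v hvV, rfl⟩)
      · exact Submodule.mem_sup_left (Submodule.mem_sup_right
          (Submodule.smul_mem _ _ (Submodule.mem_span_singleton_self _)))
      · exact Submodule.mem_sup_left (Submodule.mem_sup_left
          (Submodule.smul_mem _ _ (Submodule.mem_span_singleton_self _)))
    · refine sup_le (sup_le ?_ ?_) (Submodule.map_mono hM'le)
      · exact (Submodule.span_singleton_le_iff_mem _ _).2 ⟨w, hwV, rfl⟩
      · exact (Submodule.span_singleton_le_iff_mem _ _).2 ⟨y, hyV, rfl⟩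
  have hdisjwy : Submodule.span k {wb} ⊓ Submodule.span k {yb} = ⊥ := by
    rw [eq_bot_iff]
    intro x hx
    rw [Submodule.mem_inf] at hx
    obtain ⟨hx1, hx2⟩ := hx
    rw [Submodule.mem_span_singleton] at hx1 hx2
    obtain ⟨a, ha⟩ := hx1
    obtain ⟨b, hb⟩ := hx2
    have hax : Bbar B x yb = a := by rw [← ha]; simp [hBbar_wy]
    have hbx : Bbar B x yb = 0 := by rw [← hb]; simp [hBbar_yy]
    have ha0 : a = 0 := by rw [← hax, hbx]
    rw [Submodule.mem_bot, ← ha, ha0, zero_smul]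
  have hwbLb : wb ∈ Lb := hwred
  have hdisjM' : (Submodule.span k {wb} ⊔ Submodule.span k {yb}) ⊓ M'.map (red k m) = ⊥ := by
    rw [eq_bot_iff]
    intro x hx
    rw [Submodule.mem_inf] at hx
    obtain ⟨hx1, hx2⟩ := hx
    obtain ⟨v', hv'M', hv'⟩ := hx2
    rw [Submodule.mem_sup] at hx1
    obtain ⟨s, hs, u, hu, hsu⟩ := hx1
    rw [Submodule.mem_span_singleton] at hs hu
    obtain ⟨a, ha⟩ := hs
    obtain ⟨b, hb⟩ := hu
    obtain ⟨hv'V, hv'w, hv'y⟩ := (mem_M' v').1 hv'M'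
    have hBv'w : Bbar B wb (red k m v') = 0 := by rw [hwb, Bbar_red, hv'w]; simp
    have hBv'y : Bbar B yb (red k m v') = 0 := by rw [hyb, Bbar_red, hv'y]; simp
    have hxw : Bbar B wb x = b := by
      rw [← hsu, ← ha, ← hb]
      simp [map_add, map_smul, hBbar_ww, hBbar_wy, smul_eq_mul]
    have hxy : Bbar B yb x = -a := by
      rw [← hsu, ← ha, ← hb]
      simp [map_add, map_smul, hBbar_yw, hBbar_yy, smul_eq_mul]
    have hxw0 : Bbar B wb x = 0 := by rw [← hv']; exact hBv'w
    have hxy0 : Bbar B yb x = 0 := by rw [← hv']; exact hBv'y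
    have ha0 : a = 0 := by have := hxy0; rw [hxy] at this; simpa using this.symm
    have hb0 : b = 0 := by rw [← hxw, hxw0]
    rw [Submodule.mem_bot, ← hsu, ← ha, ← hb, ha0, hb0, zero_smul, zero_smul, add_zero]
  have hspan2 : Module.finrank k ↥(Submodule.span k {wb} ⊔ Submodule.span k {yb}) = 2 := by
    have hadd := Submodule.finrank_sup_add_finrank_inf_eq
      (Submodule.span k {wb}) (Submodule.span k {yb})
    rw [hdisjwy, finrank_span_singleton hwbne, finrank_span_singleton hybne] at hadd
    simpa using hadd
  have h6' : Module.finrank k ↥(M'.map (red k m)) = 2 * n := by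
    have hadd := Submodule.finrank_sup_add_finrank_inf_eq
      (Submodule.span k {wb} ⊔ Submodule.span k {yb}) (M'.map (red k m))
    rw [hdisjM', hspan2, ← hsupV, h6] at hadd
    simp only [finrank_bot, add_zero] at hadd
    omega
  have hNmapsplit : N.map (red k m) = Submodule.span k {zb} ⊔ N'.map (red k m) := by
    conv_lhs => rw [hNsplit]
    rw [Submodule.map_sup, Submodule.map_span, Set.image_singleton]
  have hdisjz : Submodule.span k {zb} ⊓ N'.map (red k m) = ⊥ := by
    rw [eq_bot_iff]
    intro x hx
    rw [Submodule.mem_inf] at hx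
    obtain ⟨hx1, hx2⟩ := hx
    obtain ⟨n₁, hn₁, hn₁x⟩ := hx2
    rw [Submodule.mem_span_singleton] at hx1
    obtain ⟨a, ha⟩ := hx1
    have h1x : Bbar B tb x = a * Bbar B tb zb := by
      rw [← ha]; simp [map_smul, smul_eq_mul]
    have h2x : Bbar B tb x = 0 := by
      rw [← hn₁x, htb, Bbar_red, htM' n₁ hn₁.2]
    have ha0 : a = 0 := by
      rw [h1x] at h2x
      rcases mul_eq_zero.1 h2x with h | h
      · exact h
      · exact absurd h htzb
    rw [Submodule.mem_bot, ← ha, ha0, zero_smul]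
  have h7' : Module.finrank k ↥(N'.map (red k m)) = n := by
    have hadd := Submodule.finrank_sup_add_finrank_inf_eq
      (Submodule.span k {zb}) (N'.map (red k m))
    rw [hdisjz, finrank_span_singleton hzbne, ← hNmapsplit, h7] at hadd
    simp only [finrank_bot, add_zero] at hadd
    omega
  have hprbarwb : prbar wb = 0 := by
    rw [hprbar_apply, hBbar_ww, hBbar_yw]
    simp
  have h8' : Module.finrank k ↥Lb' = n := by
    have hrange : LinearMap.range (prbar.comp Lb.subtype) = Lb' := by
      rw [LinearMap.range_comp, Submodule.range_subtype]
    have hker : LinearMap.ker (prbar.comp Lb.subtype)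
        = Submodule.comap Lb.subtype (Submodule.span k {wb}) := by
      ext x
      rw [LinearMap.mem_ker, Submodule.mem_comap]
      constructor
      · intro hx0
        have hx0' : prbar (↑x : Fin m → k) = 0 := hx0
        rw [hprbar_apply, h10 wb hwbLb (↑x) x.2, zero_smul, sub_zero] at hx0'
        have hxe : (↑x : Fin m → k) = -(Bbar B yb ↑x) • wb := by
          rw [neg_smul]
          exact eq_neg_of_add_eq_zero_left hx0'
        show (↑x : Fin m → k) ∈ Submodule.span k {wb}
        rw [hxe]
        exact Submodule.smul_mem _ _ (Submodule.mem_span_singleton_self _)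
      · intro hx
        rw [Submodule.mem_span_singleton] at hx
        obtain ⟨a, ha⟩ := hx
        have h2 := congrArg prbar ha
        rw [map_smul, hprbarwb, smul_zero] at h2
        exact h2.symm
    have hsubw : Submodule.span k {wb} ≤ Lb :=
      (Submodule.span_singleton_le_iff_mem _ _).2 hwbLb
    have hkerrank : Module.finrank k ↥(LinearMap.ker (prbar.comp Lb.subtype)) = 1 := by
      rw [hker]
      rw [LinearEquiv.finrank_eq (Submodule.comapSubtypeEquivOfLe hsubw)]
      exact finrank_span_singleton hwbne
    have hrn := LinearMap.finrank_range_add_finrank_ker (prbar.comp Lb.subtype)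
    rw [hrange, hkerrank] at hrn
    have hfLb : Module.finrank k ↥Lb = n + 1 := h8
    rw [hfLb] at hrn
    omega
  have h9' : ∀ x ∈ N', ∀ yy ∈ N', B x yy = 0 := fun x hx yy hy => h9 x hx.1 yy hy.1
  have h10' : ∀ a ∈ Lb', ∀ b ∈ Lb', Bbar B a b = 0 := by
    rintro _ ⟨a, ha, rfl⟩ _ ⟨b, hb, rfl⟩
    have hpa : prbar a = a + (Bbar B yb a) • wb := by
      rw [hprbar_apply, h10 wb hwbLb a ha]
      simp
    have hpb : prbar b = b + (Bbar B yb b) • wb := by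
      rw [hprbar_apply, h10 wb hwbLb b hb]
      simp
    rw [hpa, hpb]
    simp [map_add, map_smul, LinearMap.add_apply, LinearMap.smul_apply, smul_eq_mul,
      h10 a ha b hb, h10 a ha wb hwbLb, h10 wb hwbLb b hb, hBbar_ww]
  obtain ⟨L', hL'le, ⟨C', hC'1, hC'2⟩, hL'map, hL'iso, hL'Ninf⟩ :=
    IH M' N' Lb' h1' h2' h5' h6' h7' h8' h9' h10'
  have hC'M' : C' ≤ M' := le_trans le_sup_right (le_of_eq hC'2)
  -- facts about e
  have heV : e ∈ V := by
    rcases hE with ⟨_, he⟩ | ⟨_, he⟩ <;> subst he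
    · exact add_mem hwV (Submodule.smul_mem _ _ hyV)
    · exact hwV
  have hered : red k m e = wb := by
    rcases hE with ⟨_, he⟩ | ⟨_, he⟩ <;> subst he
    · rw [map_add, LinearMap.map_smulₛₗ]
      simp [hwb]
    · rw [hwb]
  have hBeM' : ∀ v ∈ M', B e v = 0 := by
    intro v hv
    obtain ⟨_, h1v, h2v⟩ := (mem_M' v).1 hv
    rcases hE with ⟨_, he⟩ | ⟨_, he⟩ <;> subst he
    · simp [map_add, map_smul, LinearMap.add_apply, LinearMap.smul_apply, smul_eq_mul, h1v, h2v]
    · exact h1v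
  have hBee : B e e = 0 := by
    rcases hE with ⟨_, he⟩ | ⟨_, he⟩ <;> subst he
    · simp [map_add, map_smul, LinearMap.add_apply, LinearMap.smul_apply, smul_eq_mul,
        halt, hwy, hByw]
    · exact halt _
  have hBey : B e y = 1 := by
    rcases hE with ⟨_, he⟩ | ⟨_, he⟩ <;> subst he
    · simp [map_add, map_smul, LinearMap.add_apply, LinearMap.smul_apply, smul_eq_mul,
        halt, hwy]
    · exact hwy
  have hwspan : w ∈ Submodule.span (PowerSeries k) {e} ⊔ Submodule.span (PowerSeries k) {y} := by
    rcases hE with ⟨_, he⟩ | ⟨_, he⟩ <;> subst he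
    · have hmem : (w + (PowerSeries.X : PowerSeries k) • y)
          - (PowerSeries.X : PowerSeries k) • y
          ∈ Submodule.span (PowerSeries k) {w + (PowerSeries.X : PowerSeries k) • y}
            ⊔ Submodule.span (PowerSeries k) {y} := by
        exact sub_mem (Submodule.mem_sup_left (Submodule.mem_span_singleton_self _))
          (Submodule.mem_sup_right (Submodule.smul_mem _ _ (Submodule.mem_span_singleton_self _)))
      have heq : (w + (PowerSeries.X : PowerSeries k) • y)
          - (PowerSeries.X : PowerSeries k) • y = w := by abel
      rw [heq] at hmem
      exact hmem
    · exact Submodule.mem_sup_left (Submodule.mem_span_singleton_self _)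
  have hceN : ∀ c : PowerSeries k, c • e ∈ N → c = 0 := by
    intro c hc
    rcases hE with ⟨hzw, he⟩ | ⟨hzy, he⟩
    · have h0 : B (c • e) z = 0 := h9 _ hc _ hzN
      rw [he, hzw] at h0
      simp [map_smul, map_add, LinearMap.add_apply, LinearMap.smul_apply, smul_eq_mul,
        halt, hByw] at h0
      first
        | exact h0
        | (rcases h0 with h | h
           · exact h
           · exact absurd h PowerSeries.X_ne_zero)
      
    · have h0 : B (c • e) z = 0 := h9 _ hc _ hzN
      rw [he, hzy] at h0
      simpa [map_smul, smul_eq_mul, hwy] using h0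
  refine ⟨Submodule.span (PowerSeries k) {e} ⊔ L', ?_,
    ⟨Submodule.span (PowerSeries k) {y} ⊔ C', ?_, ?_⟩, ?_, ?_, ?_⟩
  · exact sup_le ((Submodule.span_singleton_le_iff_mem _ _).2 heV) (le_trans hL'le hM'le)
  · rw [eq_bot_iff]
    intro v hv
    rw [Submodule.mem_inf] at hv
    obtain ⟨hvL, hvC⟩ := hv
    rw [Submodule.mem_sup] at hvL hvC
    obtain ⟨s, hs, l', hl', hrfl⟩ := hvL
    obtain ⟨s2, hs2, c'', hc'', heq2⟩ := hvC
    rw [Submodule.mem_span_singleton] at hs hs2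
    obtain ⟨c, hcc⟩ := hs
    obtain ⟨d, hdd⟩ := hs2
    have hprv : pr v = l' := by
      rw [← hrfl, ← hcc, map_add, map_smul, hpre, smul_zero, zero_add]
      exact hprM'id l' (hL'le hl')
    have hprv2 : pr v = c'' := by
      rw [← heq2, ← hdd, map_add, map_smul, hpry, smul_zero, zero_add]
      exact hprM'id c'' (hC'M' hc'')
    have hl'c'' : l' = c'' := by rw [← hprv, hprv2]
    have hl'0 : l' = 0 := by
      have hmem : l' ∈ L' ⊓ C' := ⟨hl', by rw [hl'c'']; exact hc''⟩
      rw [hC'1] at hmem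
      exact hmem
    have hc''0 : c'' = 0 := by rw [← hl'c'', hl'0]
    have hv1 : v = c • e := by rw [← hrfl, ← hcc, hl'0, add_zero]
    have hv2 : v = d • y := by rw [← heq2, ← hdd, hc''0, add_zero]
    have hveq : c • e = d • y := hv1.symm.trans hv2
    have hc0 : c = 0 := by
      have h1c := congrArg (fun vv => B vv y) hveq
      simp only [map_smul, LinearMap.smul_apply, smul_eq_mul, hBey, halt] at h1c
      simpa using h1c
    rw [Submodule.mem_bot, ← hrfl, ← hcc, hl'0, hc0, zero_smul, zero_add]
  · -- sup equals V
    apply le_antisymm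
    · refine sup_le (sup_le ?_ ?_) (sup_le ?_ ?_)
      · exact (Submodule.span_singleton_le_iff_mem _ _).2 heV
      · exact le_trans hL'le hM'le
      · exact (Submodule.span_singleton_le_iff_mem _ _).2 hyV
      · exact le_trans hC'M' hM'le
    · intro v hv
      have hyS : y ∈ (Submodule.span (PowerSeries k) {e} ⊔ L')
          ⊔ (Submodule.span (PowerSeries k) {y} ⊔ C') :=
        Submodule.mem_sup_right (Submodule.mem_sup_left (Submodule.mem_span_singleton_self _))
      have hM'S : M' ≤ (Submodule.span (PowerSeries k) {e} ⊔ L')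
          ⊔ (Submodule.span (PowerSeries k) {y} ⊔ C') := by
        rw [← hC'2]
        exact sup_le (le_trans le_sup_right le_sup_left) (le_trans le_sup_right le_sup_right)
      have hwS : w ∈ (Submodule.span (PowerSeries k) {e} ⊔ L')
          ⊔ (Submodule.span (PowerSeries k) {y} ⊔ C') := by
        have hle : Submodule.span (PowerSeries k) {e} ⊔ Submodule.span (PowerSeries k) {y}
            ≤ (Submodule.span (PowerSeries k) {e} ⊔ L')
              ⊔ (Submodule.span (PowerSeries k) {y} ⊔ C') :=
          sup_le (le_trans le_sup_left le_sup_left) (le_trans le_sup_left le_sup_right)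
        exact hle hwspan
      have hdec : v = (B w v) • y - (B y v) • w + pr v := by
        rw [hpr_apply]
        abel
      rw [hdec]
      exact add_mem (sub_mem (Submodule.smul_mem _ _ hyS) (Submodule.smul_mem _ _ hwS))
        (hM'S (hprVM' v hv))
  · -- reduction equals Lb
    rw [Submodule.map_sup, Submodule.map_span, Set.image_singleton, hered, hL'map]
    apply le_antisymm
    · refine sup_le ((Submodule.span_singleton_le_iff_mem _ _).2 hwbLb) ?_
      rintro _ ⟨a, ha, rfl⟩
      have hpa : prbar a = a + (Bbar B yb a) • wb := by
        rw [hprbar_apply, h10 wb hwbLb a ha]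
        simp
      rw [hpa]
      exact add_mem ha (Submodule.smul_mem _ _ hwbLb)
    · intro a ha
      have hdec : a = prbar a - (Bbar B yb a) • wb := by
        rw [hprbar_apply, h10 wb hwbLb a ha, zero_smul, sub_zero]
        abel
      rw [hdec]
      exact sub_mem (Submodule.mem_sup_right ⟨a, ha, rfl⟩)
        (Submodule.mem_sup_left (Submodule.smul_mem _ _ (Submodule.mem_span_singleton_self _)))
  · -- isotropy
    intro x hx x' hx'
    rw [Submodule.mem_sup] at hx hx'
    obtain ⟨s, hs, l', hl', hrfl⟩ := hx
    obtain ⟨s2, hs2, l'', hl'', hrfl2⟩ := hx'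
    rw [Submodule.mem_span_singleton] at hs hs2
    obtain ⟨c, hcc⟩ := hs
    obtain ⟨c', hcc2⟩ := hs2
    have h1e : B e l'' = 0 := hBeM' l'' (hL'le hl'')
    have h2e : B l' e = 0 := by
      rw [skew B halt, hBeM' l' (hL'le hl')]
      simp
    rw [← hrfl, ← hrfl2, ← hcc, ← hcc2]
    simp [map_add, map_smul, LinearMap.add_apply, LinearMap.smul_apply, smul_eq_mul,
      hBee, h1e, h2e, hL'iso l' hl' l'' hl'']
  · -- intersection with N
    rw [eq_bot_iff]
    intro v hv
    rw [Submodule.mem_inf] at hv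
    obtain ⟨hvL, hvN⟩ := hv
    rw [Submodule.mem_sup] at hvL
    obtain ⟨s, hs, l', hl', hrfl⟩ := hvL
    rw [Submodule.mem_span_singleton] at hs
    obtain ⟨c, hcc⟩ := hs
    have hprv : pr v = l' := by
      rw [← hrfl, ← hcc, map_add, map_smul, hpre, smul_zero, zero_add]
      exact hprM'id l' (hL'le hl')
    have hl'N : l' ∈ N := by
      rw [← hprv]
      exact hpN _ hvN
    have hl'0 : l' = 0 := by
      have hmem : l' ∈ L' ⊓ N' := ⟨hl', hl'N, hL'le hl'⟩
      rw [hL'Ninf] at hmem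
      exact hmem
    have hc0 : c = 0 := by
      refine hceN c ?_
      have : v = c • e := by rw [← hrfl, ← hcc, hl'0, add_zero]
      rw [← this]
      exact hvN
    rw [Submodule.mem_bot, ← hrfl, ← hcc, hl'0, hc0, zero_smul, zero_add]



set_option maxHeartbeats 1000000 in
set_option synthInstance.maxHeartbeats 1000000 in
lemma key (halt : ∀ x, B x x = 0) : ∀ n : ℕ, KeyStmt B n := by
  intro n
  induction n with
  | zero =>
    intro V N Lb h1 h2 h5 h6 h7 h8 h9 h10
    have hLb : Lb = ⊥ := by
      have := Submodule.finrank_eq_zero (R := k) (S := Lb)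
      exact this.1 h8
    refine ⟨⊥, bot_le, ⟨V, by simp, by simp⟩, ?_, ?_, by simp⟩
    · rw [Submodule.map_bot, hLb]
    · intro x hx yy hy
      rw [Submodule.mem_bot] at hx
      rw [hx]
      simp
  | succ n ih =>
    intro V N Lb h1 h2 h5 h6 h7 h8 h9 h10
    by_cases hc : Lb ⊓ N.map (red k m) = ⊥
    · -- case B : the reduction of N meets Lb trivially
      have hLbne : Lb ≠ ⊥ := by
        intro h0
        rw [h0] at h8
        simp [finrank_bot] at h8
      obtain ⟨wb, hwbLb, hwbne⟩ := Submodule.exists_mem_ne_zero_of_ne_bot hLbne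
      obtain ⟨w, hwV, hwred⟩ := h2 hwbLb
      have hexist : ∃ n₀ ∈ N, PowerSeries.constantCoeff (R := k) (B w n₀) ≠ 0 := by
        by_contra hcon
        push_neg at hcon
        set Nb := N.map (red k m) with hNb
        set Vb := V.map (red k m) with hVb
        have hNbVb : Nb ≤ Vb := Submodule.map_mono h1
        have hNbiso : ∀ a ∈ Nb, ∀ b ∈ Nb, Bbar B a b = 0 := by
          rintro _ ⟨n₁, hn₁, rfl⟩ _ ⟨n₂, hn₂, rfl⟩
          rw [Bbar_red, h9 n₁ hn₁ n₂ hn₂]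
          simp
        set Ψ : (Fin m → k) →ₗ[k] Module.Dual k ↥Nb :=
          { toFun := fun vb => (Bbar B vb).comp Nb.subtype
            map_add' := by intro a b; ext x; simp
            map_smul' := by intro c a; ext x; simp } with hΨ
        set Φ : ↥Vb →ₗ[k] Module.Dual k ↥Nb := Ψ.comp Vb.subtype with hΦ
        have hsurj : Function.Surjective Φ := by
          intro χ0
          obtain ⟨D, hD⟩ := Submodule.exists_isCompl Nb
          set χhat : Module.Dual k (Fin m → k) :=
            χ0.comp (Nb.linearProjOfIsCompl D hD) with hχhat
          have hχN : ∀ xb : ↥Nb, χhat ↑xb = χ0 xb := by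
            intro xb
            rw [hχhat]
            simp [Submodule.linearProjOfIsCompl_apply_left]
            exact congrArg χ0 (Submodule.linearProjOfIsCompl_apply_left hD xb)
          obtain ⟨φ, hφ⟩ := lift_dual V χhat
          obtain ⟨v, hv⟩ := h5 φ
          have hvVb : red k m ↑v ∈ Vb := ⟨↑v, v.2, rfl⟩
          refine ⟨⟨red k m ↑v, hvVb⟩, ?_⟩
          ext nb
          obtain ⟨n₁, hn₁, hn₁b⟩ := nb.2
          show Bbar B (red k m ↑v) ↑nb = χ0 nb
          rw [← hn₁b, Bbar_red, hv ⟨n₁, h1 hn₁⟩, hφ ⟨n₁, h1 hn₁⟩]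
          have : red k m ↑(⟨n₁, h1 hn₁⟩ : ↥V) = red k m n₁ := rfl
          rw [this, hn₁b]
          exact hχN nb
        have hrange : LinearMap.range Φ = ⊤ := LinearMap.range_eq_top.2 hsurj
        have hdimdual : Module.finrank k (Module.Dual k ↥Nb) = n + 1 := by
          rw [Subspace.dual_finrank_eq]
          exact h7
        have hdimker : Module.finrank k ↥(LinearMap.ker Φ) = n + 1 := by
          have hrn := LinearMap.finrank_range_add_finrank_ker Φ
          rw [hrange, finrank_top, hdimdual, h6] at hrn
          omega
        have hcomaple : Submodule.comap Vb.subtype Nb ≤ LinearMap.ker Φ := by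
          intro x hx
          rw [LinearMap.mem_ker]
          ext nb
          show Bbar B ↑x ↑nb = 0
          exact hNbiso ↑x hx ↑nb nb.2
        have hcomaprank : Module.finrank k ↥(Submodule.comap Vb.subtype Nb) = n + 1 := by
          rw [LinearEquiv.finrank_eq (Submodule.comapSubtypeEquivOfLe hNbVb)]
          exact h7
        have heq : Submodule.comap Vb.subtype Nb = LinearMap.ker Φ :=
          Submodule.eq_of_le_of_finrank_eq hcomaple (by rw [hcomaprank, hdimker])
        have hwbVb : wb ∈ Vb := h2 hwbLb
        have hwbker : (⟨wb, hwbVb⟩ : ↥Vb) ∈ LinearMap.ker Φ := by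
          rw [LinearMap.mem_ker]
          ext nb
          obtain ⟨n₁, hn₁, hn₁b⟩ := nb.2
          show Bbar B wb ↑nb = 0
          rw [← hn₁b, ← hwred, Bbar_red]
          exact hcon n₁ hn₁
        rw [← heq] at hwbker
        have hwbNb : wb ∈ Nb := hwbker
        have hmem : wb ∈ Lb ⊓ Nb := ⟨hwbLb, hwbNb⟩
        rw [hc] at hmem
        exact hwbne hmem
      obtain ⟨n₀, hn₀N, hn₀⟩ := hexist
      have hunit : IsUnit (B w n₀) :=
        PowerSeries.isUnit_iff_constantCoeff.2 (isUnit_iff_ne_zero.2 hn₀)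
      have hyN : (↑hunit.unit⁻¹ : PowerSeries k) • n₀ ∈ N := Submodule.smul_mem _ _ hn₀N
      have hwy : B w ((↑hunit.unit⁻¹ : PowerSeries k) • n₀) = 1 := by
        rw [map_smul, smul_eq_mul]
        nth_rewrite 2 [← hunit.unit_spec]
        exact Units.inv_mul _
      refine key_step B halt n V N Lb h1 h2 h5 h6 h7 h8 h9 h10 ih
        w ((↑hunit.unit⁻¹ : PowerSeries k) • n₀) ((↑hunit.unit⁻¹ : PowerSeries k) • n₀) w w
        hwV (h1 hyN) hwy (by rw [hwred]; exact hwbLb) hyN (Or.inl rfl) ?_ (Or.inr ⟨rfl, rfl⟩)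
      rw [hwy]
      simp
    · -- case A : Lb meets the reduction of N
      obtain ⟨wb, hwbmem, hwbne⟩ := Submodule.exists_mem_ne_zero_of_ne_bot hc
      rw [Submodule.mem_inf] at hwbmem
      obtain ⟨hwbLb, hwbN⟩ := hwbmem
      obtain ⟨w, hwN, hwred⟩ := hwbN
      have hwV : w ∈ V := h1 hwN
      obtain ⟨j, hj⟩ := Function.ne_iff.1 hwbne
      have hj' : wb j ≠ 0 := by simpa using hj
      set χ : Module.Dual k (Fin m → k) := (wb j)⁻¹ • (LinearMap.proj j) with hχ
      have hχwb : χ wb = 1 := by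
        rw [hχ]
        simp [inv_mul_cancel₀ hj']
      obtain ⟨φ, hφ⟩ := lift_dual V χ
      have hφw : PowerSeries.constantCoeff (R := k) (φ ⟨w, hwV⟩) = 1 := by
        rw [hφ ⟨w, hwV⟩]
        have : red k m ↑(⟨w, hwV⟩ : ↥V) = wb := hwred
        rw [this, hχwb]
      have hunit : IsUnit (φ ⟨w, hwV⟩) := by
        rw [PowerSeries.isUnit_iff_constantCoeff, hφw]
        exact isUnit_one
      obtain ⟨v, hv⟩ := h5 φ
      have hvw : B ↑v w = φ ⟨w, hwV⟩ := hv ⟨w, hwV⟩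
      have hyV : -((↑hunit.unit⁻¹ : PowerSeries k) • (↑v : Fin m → PowerSeries k)) ∈ V :=
        neg_mem (Submodule.smul_mem _ _ v.2)
      have hwy : B w (-((↑hunit.unit⁻¹ : PowerSeries k) • (↑v : Fin m → PowerSeries k))) = 1 := by
        rw [map_neg, map_smul, smul_eq_mul]
        rw [skew B halt w ↑v, hvw]
        rw [mul_neg, neg_neg]
        nth_rewrite 2 [← hunit.unit_spec]
        exact Units.inv_mul _
      refine key_step B halt n V N Lb h1 h2 h5 h6 h7 h8 h9 h10 ih
        w (-((↑hunit.unit⁻¹ : PowerSeries k) • (↑v : Fin m → PowerSeries k))) w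
        (-((↑hunit.unit⁻¹ : PowerSeries k) • (↑v : Fin m → PowerSeries k)))
        (w + (PowerSeries.X : PowerSeries k) •
          (-((↑hunit.unit⁻¹ : PowerSeries k) • (↑v : Fin m → PowerSeries k))))
        hwV hyV hwy (by rw [hwred]; exact hwbLb) hwN (Or.inr rfl) ?_ (Or.inl ⟨rfl, rfl⟩)
      have hyw : B (-((↑hunit.unit⁻¹ : PowerSeries k) • (↑v : Fin m → PowerSeries k))) w
          = -1 := by
        rw [skew B halt _ w, hwy]
      rw [hyw]
      simp

end Key

end Stmt7Aux

open Stmt7Aux in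
set_option maxHeartbeats 1000000 in
set_option synthInstance.maxHeartbeats 1000000 in
theorem stmt_7' (k : Type*) [Field k] (g : ℕ)
    (hk : Infinite k ∨ ringChar k ≠ 2)
    (B : (Fin (2 * g) → PowerSeries k) →ₗ[PowerSeries k]
      Module.Dual (PowerSeries k) (Fin (2 * g) → PowerSeries k))
    (hperf : Function.Bijective B)
    (halt : ∀ x, B x x = 0)
    (N : Submodule (PowerSeries k) (Fin (2 * g) → PowerSeries k))
    (hNsum : ∃ N', IsCompl N N')
    (hNrank : Module.finrank (PowerSeries k) N = g)
    (hNiso : ∀ x ∈ N, ∀ y ∈ N, B x y = 0)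
    (Lbar : Submodule k (Fin (2 * g) → k))
    (hLrank : Module.finrank k Lbar = g)
    (hLiso : ∀ m m' : Fin (2 * g) → PowerSeries k,
      (fun i => PowerSeries.constantCoeff (R := k) (m i)) ∈ Lbar →
      (fun i => PowerSeries.constantCoeff (R := k) (m' i)) ∈ Lbar →
      PowerSeries.constantCoeff (R := k) (B m m') = 0) :
    ∃ L : Submodule (PowerSeries k) (Fin (2 * g) → PowerSeries k),
      (∃ L', IsCompl L L') ∧
      Module.finrank (PowerSeries k) L = g ∧
      (∀ x ∈ L, ∀ y ∈ L, B x y = 0) ∧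
      ((fun (m : Fin (2 * g) → PowerSeries k) (i : Fin (2 * g)) =>
          PowerSeries.constantCoeff (R := k) (m i)) ''
        (L : Set (Fin (2 * g) → PowerSeries k)) = (Lbar : Set (Fin (2 * g) → k))) ∧
      L ⊓ N = ⊥ := by
  classical
  obtain ⟨N', hNc⟩ := hNsum
  have hN1 : N ⊓ N' = ⊥ := disjoint_iff.1 hNc.disjoint
  have hN2 : N ⊔ N' = ⊤ := codisjoint_iff.1 hNc.codisjoint
  have h5top : ∀ φ : Module.Dual (PowerSeries k)
      ↥(⊤ : Submodule (PowerSeries k) (Fin (2 * g) → PowerSeries k)),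
      ∃ v : ↥(⊤ : Submodule (PowerSeries k) (Fin (2 * g) → PowerSeries k)),
        ∀ u : ↥(⊤ : Submodule (PowerSeries k) (Fin (2 * g) → PowerSeries k)),
          B ↑v ↑u = φ u := by
    intro φ
    obtain ⟨v, hv⟩ := hperf.2 (φ.comp (Submodule.topEquiv.symm :
      (Fin (2 * g) → PowerSeries k) ≃ₗ[PowerSeries k] _).toLinearMap)
    refine ⟨⟨v, trivial⟩, ?_⟩
    intro u
    exact LinearMap.congr_fun hv ↑u
  have hredtop : (⊤ : Submodule (PowerSeries k) (Fin (2 * g) → PowerSeries k)).map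
      (red k (2 * g)) = ⊤ := by
    rw [Submodule.map_top, LinearMap.range_eq_top]
    intro x
    exact ⟨liftC x, red_liftC x⟩
  have h6top : Module.finrank k
      ↥((⊤ : Submodule (PowerSeries k) (Fin (2 * g) → PowerSeries k)).map (red k (2 * g)))
      = 2 * g := by
    rw [hredtop, finrank_top]
    simp
  have h7top : Module.finrank k ↥(N.map (red k (2 * g))) = g := by
    rw [finrank_red_of_summand N N' hN1 hN2, hNrank]
  have h10top : ∀ a ∈ Lbar, ∀ b ∈ Lbar, Bbar B a b = 0 := by
    intro a ha b hb
    rw [Bbar_apply]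
    apply hLiso (liftC a) (liftC b)
    · have h : (fun i => PowerSeries.constantCoeff (R := k) ((liftC a) i)) = a := by
        funext i
        simp [liftC]
      rw [h]
      exact ha
    · have h : (fun i => PowerSeries.constantCoeff (R := k) ((liftC b) i)) = b := by
        funext i
        simp [liftC]
      rw [h]
      exact hb
  obtain ⟨L, hLle, ⟨C, hC1, hC2⟩, hLmap, hLiso', hLN⟩ :=
    key B halt g ⊤ N Lbar le_top (by rw [hredtop]; exact le_top) h5top h6top h7top hLrank
      hNiso h10top
  refine ⟨L, ⟨C, ⟨disjoint_iff.2 hC1, codisjoint_iff.2 hC2⟩⟩, ?_, hLiso', ?_, hLN⟩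
  · have hfr := finrank_red_of_summand L C hC1 hC2
    rw [hLmap] at hfr
    rw [← hfr]
    exact hLrank
  · have himg := congrArg
      (fun (S : Submodule k (Fin (2 * g) → k)) => (S : Set (Fin (2 * g) → k))) hLmap
    simp only [Submodule.map_coe] at himg
    exact himg

/-- Lemma lift_C: Let `M` be a free `k[[X]]`-module of rank `2g`
(`M = (Fin (2*g) → k[[X]])`) with a perfect alternating pairing `B`, `N ⊆ M` a totally
isotropic direct summand of rank `g`, and `L̄` a totally isotropic `g`-dimensional
subspace of `M/XM` (isotropy of `L̄` is expressed via lifts, using that the reduction of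
`B` only depends on reductions). If `k` is infinite, or `char k ≠ 2` (and `k` admits an
invertible symmetric `g×g` matrix, which always holds), then there is a totally isotropic
direct summand `L ⊆ M` of rank `g` lifting `L̄` with `(L ∩ N) ⊗ k((X)) = 0`
(equivalently, `L ⊓ N = ⊥`, both being torsion-free). -/
theorem stmt_7 (k : Type*) [Field k] (g : ℕ)
    (hk : Infinite k ∨ ringChar k ≠ 2)
    (B : (Fin (2 * g) → PowerSeries k) →ₗ[PowerSeries k]
      Module.Dual (PowerSeries k) (Fin (2 * g) → PowerSeries k))
    (hperf : Function.Bijective B)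
    (halt : ∀ x, B x x = 0)
    (N : Submodule (PowerSeries k) (Fin (2 * g) → PowerSeries k))
    (hNsum : ∃ N', IsCompl N N')
    (hNrank : Module.finrank (PowerSeries k) N = g)
    (hNiso : ∀ x ∈ N, ∀ y ∈ N, B x y = 0)
    (Lbar : Submodule k (Fin (2 * g) → k))
    (hLrank : Module.finrank k Lbar = g)
    (hLiso : ∀ m m' : Fin (2 * g) → PowerSeries k,
      (fun i => @PowerSeries.constantCoeff k _ (m i)) ∈ Lbar →
      (fun i => @PowerSeries.constantCoeff k _ (m' i)) ∈ Lbar →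
      @PowerSeries.constantCoeff k _ (B m m') = 0) :
    ∃ L : Submodule (PowerSeries k) (Fin (2 * g) → PowerSeries k),
      (∃ L', IsCompl L L') ∧
      Module.finrank (PowerSeries k) L = g ∧
      (∀ x ∈ L, ∀ y ∈ L, B x y = 0) ∧
      ((fun (m : Fin (2 * g) → PowerSeries k) (i : Fin (2 * g)) =>
          @PowerSeries.constantCoeff k _ (m i)) ''
        (L : Set (Fin (2 * g) → PowerSeries k)) = (Lbar : Set (Fin (2 * g) → k))) ∧
      L ⊓ N = ⊥ := by
  exact stmt_7' k g hk B hperf halt N hNsum hNrank hNiso Lbar hLrank hLiso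
end

section
/- Let W be a complete discrete valuation ring and M a finite free W⊗_{Z_p} O-module where O is the ring of integers of a finite extension F of Q_p, equipped with a σ-semilinear map F: M → M whose τ-component F_τ: M_τ → M_{στ} (for each embedding τ of the maximal unramified subfield) is divisible by π^{a_τ} but not π^{a_τ+1}. Then setting F^0_τ = π^{−a_τ} F_τ yields well-defined maps, and if h is a perfect s-antihermitian pairing h: M × M → W ⊗ Diff^{-1} with h(x, F y) = h(Vx, y)^σ and V_τ divisible by π̄^{a_{τ̄}}, then with V^0_τ = π̄^{−a_{τ̄}} V_τ one has h(F^0_τ x, y) = h(x, V^0_{τ̄} y)^σ for all x ∈ M_τ, y ∈ M_{στ̄}. -/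
/-- renormalized Frobenius/Verschiebung and the hermitian pairing, case
(AU): let `A` be the coefficient ring (playing the role of `W ⊗_{Z_p} O`), `σ` the
Frobenius (fixing the uniformizer `π`), `c` the conjugation (with `c (c π) = π`, and
`π̄ = c π`), and `π^a` a non-zero-divisor.  Let `F : M_τ → M_{στ}` be divisible by
`π^{a}` but not `π^{a+1}`, with `F = π^a • F⁰`, and `V : M_{στ̄} → M_{τ̄}` with
`V = π̄^a • V⁰`.  If `h` (pairing `M_τ` with `M_{τ̄}`) and `h'` (pairing `M_{στ}`
with `M_{στ̄}`) are `A`-sesquilinear (linear in the first variable, `c`-conjugate-linear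
in the second) and satisfy `h'(F x, y) = σ(h(x, V y))`, then
`h'(F⁰ x, y) = σ(h(x, V⁰ y))`. -/
theorem stmt_12 (A : Type*) [CommRing A]
    (σ c : A →+* A) (π : A) (a : ℕ)
    (hσπ : σ π = π) (hcc : c (c π) = π)
    (hreg : ∀ z w : A, π ^ a * z = π ^ a * w → z = w)
    (Mτ Mστ Mτbar Mστbar : Type*)
    [AddCommGroup Mτ] [Module A Mτ] [AddCommGroup Mστ] [Module A Mστ]
    [AddCommGroup Mτbar] [Module A Mτbar] [AddCommGroup Mστbar] [Module A Mστbar]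
    (F F0 : Mτ → Mστ) (V V0 : Mστbar → Mτbar)
    (hF : ∀ x, F x = π ^ a • F0 x)
    (hFndiv : ¬ ∃ F1 : Mτ → Mστ, ∀ x, F x = π ^ (a + 1) • F1 x)
    (hV : ∀ y, V y = (c π) ^ a • V0 y)
    (h : Mτ → Mτbar → A) (h' : Mστ → Mστbar → A)
    (hsesq1 : ∀ (z : A) x y, h (z • x) y = z * h x y)
    (hsesq2 : ∀ (z : A) x y, h x (z • y) = c z * h x y)
    (hsesq1' : ∀ (z : A) x y, h' (z • x) y = z * h' x y)
    (hsesq2' : ∀ (z : A) x y, h' x (z • y) = c z * h' x y)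
    (hcompat : ∀ (x : Mτ) (y : Mστbar), h' (F x) y = σ (h x (V y))) :
    ∀ (x : Mτ) (y : Mστbar), h' (F0 x) y = σ (h x (V0 y)) := by
  intro x y
  apply hreg
  have h1 : π ^ a * h' (F0 x) y = h' (F x) y := by
    rw [hF, hsesq1']
  have h2 : π ^ a * σ (h x (V0 y)) = σ (h x (V y)) := by
    rw [hV, hsesq2, map_mul, map_pow, map_pow, hcc, hσπ]
  rw [h1, h2, hcompat]
end
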